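/- arXiv:2204.01793 — 5 statements merged into one kernel-verified Lean document; each statement's English description precedes it below -/
import Mathlib

section
/- Let G = (V, E) be a finite undirected graph, e ∈ E an edge, and G' = (V, E \ {e}). For all λ ≥ 0 and β ∈ [0,1], the partition functions satisfy 0 ≤ Z_{G'}(λ, β) − Z_G(λ, β) ≤ λ² · Z_G(λ, β). In particular, |Z_{G'}(λ, β) − Z_G(λ, β)| ≤ λ² · min{Z_G(λ, β), Z_{G'}(λ, β)}. -/
open Classical in
/-- Partition function of the antiferromagnetic two-state spin system with `β₀ = 1`. -/
noncomputable def Zspin {V : Type*} [Fintype V] [DecidableEq V]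
    (E : Finset (Sym2 V)) (lam beta : ℝ) : ℝ :=
  ∑ σ : V → Bool,
    lam ^ (Finset.univ.filter fun v => σ v = true).card *
    beta ^ (E.filter fun e => ∀ v ∈ e, σ v = true).card

/-! Only configurations with both endpoints of `e = s(u, w)` set to `1` see the edge `e`, and
each of them gains a factor `β` from it, so
`Z_{E \ e} - Z_E = (1 - β) ∑_{σ u = σ w = 1} w_{E \ e}(σ) ≥ 0`.
Switching `u` and `w` off maps these configurations injectively to configurations in which `e` has
an endpoint `0`; this divides the activity part of the weight by `λ²` (here `u ≠ w` is used) and,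
as `β ≤ 1` and fewer edges are fully occupied, does not decrease the `β`-part. Hence the sum is at
most `λ² Z_E`. -/

open Finset Function

namespace Zspin

variable {V : Type*} [Fintype V] [DecidableEq V] {E : Finset (Sym2 V)} {e : Sym2 V}
  {lam beta : ℝ} {σ τ : V → Bool}

noncomputable def spinWeight (E : Finset (Sym2 V)) (lam beta : ℝ) (σ : V → Bool) : ℝ :=
  lam ^ #{v | σ v = true} * beta ^ #{e ∈ E | ∀ v ∈ e, σ v = true}

theorem eq_sum_spinWeight (E : Finset (Sym2 V)) (lam beta : ℝ) :
    Zspin E lam beta = ∑ σ, spinWeight E lam beta σ :=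
  rfl

theorem spinWeight_nonneg (hlam : 0 ≤ lam) (hbeta : 0 ≤ beta) :
    0 ≤ spinWeight E lam beta σ := by
  unfold spinWeight; positivity

theorem spinWeight_of_mem (he : e ∈ E) :
    spinWeight E lam beta σ =
      spinWeight (E.erase e) lam beta σ * if ∀ v ∈ e, σ v = true then beta else 1 := by
  unfold spinWeight
  conv_lhs => rw [← insert_erase he, filter_insert]
  split_ifs
  · rw [card_insert_of_notMem (by simp), pow_succ]; ring
  · rw [mul_one]

theorem card_filter_forall_mem_true_mono (F : Finset (Sym2 V)) (h : τ ≤ σ) :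
    #{e ∈ F | ∀ v ∈ e, τ v = true} ≤ #{e ∈ F | ∀ v ∈ e, σ v = true} :=
  card_le_card <| monotone_filter_right _ fun _ _ he v hv =>
    Bool.eq_true_of_true_le (he v hv ▸ h v)

theorem spinWeight_le_mul_update_false (hlam : 0 ≤ lam) (hbeta0 : 0 ≤ beta) (hbeta1 : beta ≤ 1)
    (F : Finset (Sym2 V)) {u : V} (hu : σ u = true) :
    spinWeight F lam beta σ ≤ lam * spinWeight F lam beta (update σ u false) := by
  have hones : #{v | update σ u false v = true} + 1 = #{v | σ v = true} := by
    rw [← card_erase_add_one (s := {v | σ v = true}) (by simpa using hu)]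
    congr 2
    ext v
    by_cases hv : v = u <;> simp [hv]
  have hedges := card_filter_forall_mem_true_mono F (σ := σ) (τ := update σ u false)
    (update_le_iff.2 ⟨Bool.false_le _, fun _ _ => le_rfl⟩)
  unfold spinWeight
  rw [← hones, pow_succ]
  calc _ = lam * (lam ^ #{v | update σ u false v = true} *
        beta ^ #{e ∈ F | ∀ v ∈ e, σ v = true}) := by ring
    _ ≤ _ := by
      gcongr lam * (_ * ?_)
      exact pow_le_pow_of_le_one hbeta0 hbeta1 hedges

theorem erase_sub_eq (he : e ∈ E) (lam beta : ℝ) :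
    Zspin (E.erase e) lam beta - Zspin E lam beta =
      (1 - beta) * ∑ σ with ∀ v ∈ e, σ v = true, spinWeight (E.erase e) lam beta σ := by
  rw [eq_sum_spinWeight, eq_sum_spinWeight, ← sum_sub_distrib, mul_sum, sum_filter]
  refine sum_congr rfl fun σ _ => ?_
  rw [spinWeight_of_mem he]
  split_ifs <;> ring

theorem sum_spinWeight_erase_le (hlam : 0 ≤ lam) (hbeta0 : 0 ≤ beta) (hbeta1 : beta ≤ 1)
    (he : e ∈ E) (hloop : ¬ e.IsDiag) :
    ∑ σ with ∀ v ∈ e, σ v = true, spinWeight (E.erase e) lam beta σ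
      ≤ lam ^ 2 * Zspin E lam beta := by
  induction e using Sym2.ind with
  | _ u w =>
  have huw : u ≠ w := fun h => hloop (Sym2.mk_isDiag_iff.2 h)
  set clear : (V → Bool) → V → Bool := fun σ => update (update σ u false) w false
  set A : Finset (V → Bool) := {σ | ∀ v ∈ s(u, w), σ v = true}
  have hweight : ∀ σ ∈ A,
      spinWeight (E.erase s(u, w)) lam beta σ ≤ lam ^ 2 * spinWeight E lam beta (clear σ) := by
    intro σ hσ
    simp only [A, mem_filter, mem_univ, true_and, Sym2.forall_mem_pair] at hσ
    have hclear : ¬ ∀ v ∈ s(u, w), clear σ v = true := by simp [clear]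
    calc _ ≤ lam * spinWeight _ lam beta (update σ u false) :=
          spinWeight_le_mul_update_false hlam hbeta0 hbeta1 _ hσ.1
      _ ≤ lam * (lam * spinWeight (E.erase s(u, w)) lam beta (clear σ)) := by
          gcongr
          exact spinWeight_le_mul_update_false hlam hbeta0 hbeta1 _
            (by rw [update_of_ne huw.symm]; exact hσ.2)
      _ = _ := by rw [spinWeight_of_mem he, if_neg hclear]; ring
  have hinj : Set.InjOn clear A := by
    refine Set.LeftInvOn.injOn (f₁' := fun τ => update (update τ u true) w true) fun σ hσ => ?_
    ext v
    simp only [clear, update_apply]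
    split_ifs <;> simp_all [A]
  calc _ ≤ ∑ σ ∈ A, lam ^ 2 * spinWeight E lam beta (clear σ) := sum_le_sum hweight
    _ = lam ^ 2 * ∑ τ ∈ A.image clear, spinWeight E lam beta τ := by rw [sum_image hinj, mul_sum]
    _ ≤ _ := by
      gcongr
      exact sum_le_univ_sum_of_nonneg fun _ => spinWeight_nonneg hlam hbeta0

end Zspin

/-- Removing a single edge `e` from a loopless graph does not decrease the partition
function, and increases it by at most a factor `1 + λ²`. -/
theorem Zspin_remove_edge {V : Type*} [Fintype V] [DecidableEq V]
    (E : Finset (Sym2 V)) (hE : ∀ e ∈ E, ¬ e.IsDiag)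
    (e : Sym2 V) (he : e ∈ E)
    (lam beta : ℝ) (hlam : 0 ≤ lam) (hbeta0 : 0 ≤ beta) (hbeta1 : beta ≤ 1) :
    (0 ≤ Zspin (E.erase e) lam beta - Zspin E lam beta ∧
      Zspin (E.erase e) lam beta - Zspin E lam beta ≤ lam ^ 2 * Zspin E lam beta) ∧
    |Zspin (E.erase e) lam beta - Zspin E lam beta|
      ≤ lam ^ 2 * min (Zspin E lam beta) (Zspin (E.erase e) lam beta) := by
  set S := ∑ σ with ∀ v ∈ e, σ v = true, Zspin.spinWeight (E.erase e) lam beta σ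
  have hdiff := Zspin.erase_sub_eq he lam beta
  have hS_nonneg : 0 ≤ S := sum_nonneg fun _ _ => Zspin.spinWeight_nonneg hlam hbeta0
  have hS_le : S ≤ lam ^ 2 * Zspin E lam beta :=
    Zspin.sum_spinWeight_erase_le hlam hbeta0 hbeta1 he (hE e he)
  have hlower : 0 ≤ Zspin (E.erase e) lam beta - Zspin E lam beta := by
    rw [hdiff]; exact mul_nonneg (by linarith) hS_nonneg
  have hupper : Zspin (E.erase e) lam beta - Zspin E lam beta ≤ lam ^ 2 * Zspin E lam beta := by
    rw [hdiff]; nlinarith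
  refine ⟨⟨hlower, hupper⟩, ?_⟩
  rwa [abs_of_nonneg hlower, min_eq_left (by linarith)]
end

section
/- Let G ~ D_n(V, φ) be a random graph from the geometric graphon model with edge probability 1 − e^{−φ(x,y)} and uniform vertex locations on V with ν(V) = Vol. Then E[Z_G(λ·Vol/n)] = 1 + Σ_{k=1}^{n} (λ^k/k!) · Π_{i=0}^{k−1}(1 − i/n) · ∫_{V^k} Π_{{i,j}} e^{−φ(x_i,x_j)} dν^k(x), where Z_G denotes the hard-core partition function. -/
open MeasureTheory

/-- In the random-graph model, an outcome `ω` consists of vertex locations `ω.1 : Fin n → X`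
and i.i.d. uniform `[0,1]` labels `ω.2` on ordered pairs; vertices `i, j` are adjacent iff the
label of the ordered pair is at most the edge probability `1 − e^{−φ(x_i, x_j)}`. -/
def edgeOcc {X : Type*} {n : ℕ} (φ : X → X → ℝ)
    (ω : (Fin n → X) × (Fin n × Fin n → ℝ)) (i j : Fin n) : Prop :=
  (i < j ∧ ω.2 (i, j) ≤ 1 - Real.exp (-φ (ω.1 i) (ω.1 j))) ∨
  (j < i ∧ ω.2 (j, i) ≤ 1 - Real.exp (-φ (ω.1 j) (ω.1 i)))

open Classical in
/-- Hard-core partition function of the random graph determined by the outcome `ω`. -/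
noncomputable def hcZrand {X : Type*} {n : ℕ} (φ : X → X → ℝ) (z : ℝ)
    (ω : (Fin n → X) × (Fin n × Fin n → ℝ)) : ℝ :=
  ∑ I : Finset (Fin n),
    if ∀ i ∈ I, ∀ j ∈ I, ¬ edgeOcc φ ω i j then z ^ I.card else 0

/-!
Expanding `Z_G(z) = ∑_I z^{|I|} 1[I independent]`, the expectation is
`∑_I z^{|I|} P(I independent)`. Given the locations `x`, the labels of distinct pairs are
independent uniforms on `[0,1]`, so `I` is independent with conditional probability
`∏_{i<j ∈ I} e^{-φ(x_i,x_j)}`. Integrating out the locations outside `I` leaves the same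
integral over `X^k` for each of the `C(n,k)` sets of size `k`, and
`C(n,k) (λ Vol/n)^k Vol^{-k} = (λ^k/k!) ∏_{i<k} (1 - i/n)` turns the uniform law `ν|_V / Vol`
into `ν|_V`.
-/

open Finset

lemma MeasureTheory.Measure.pi_const_smul {ι X : Type*} [Fintype ι] [MeasurableSpace X]
    (m : Measure X) [SigmaFinite m] (c : ENNReal) [SigmaFinite (c • m)] :
    Measure.pi (fun _ : ι => c • m) = c ^ Fintype.card ι • Measure.pi fun _ => m := by
  refine Measure.pi_eq fun s _ => ?_
  simp only [Measure.smul_apply, Measure.pi_pi, smul_eq_mul, prod_mul_distrib, prod_const,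
    card_univ]

lemma MeasureTheory.measurePreserving_pi_comp_of_injective {ι κ X : Type*} [Fintype ι]
    [Fintype κ] [MeasurableSpace X] (μ : Measure X) [IsProbabilityMeasure μ] {e : κ → ι}
    (he : Function.Injective e) :
    MeasurePreserving (fun x : ι → X => x ∘ e) (Measure.pi fun _ => μ)
      (Measure.pi fun _ => μ) := by
  classical
  have hmeas : Measurable fun x : ι → X => x ∘ e :=
    measurable_pi_lambda _ fun a => measurable_pi_apply (e a)
  refine ⟨hmeas, (Measure.pi_eq fun s hs => ?_).symm⟩
  have hpre : (fun x : ι → X => x ∘ e) ⁻¹' Set.univ.pi s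
      = Set.univ.pi (Function.extend e s fun _ => Set.univ) := by
    ext x
    simp only [Set.mem_preimage, Set.mem_univ_pi, Function.comp_apply]
    refine ⟨fun h i => ?_, fun h a => by simpa [he.extend_apply] using h (e a)⟩
    by_cases hi : ∃ a, e a = i
    · obtain ⟨a, rfl⟩ := hi
      simpa [he.extend_apply] using h a
    · simp [Function.extend_apply' _ _ _ hi]
  rw [Measure.map_apply hmeas (.univ_pi hs), hpre, Measure.pi_pi,
    ← prod_subset (subset_univ (univ.map ⟨e, he⟩)), prod_map]
  · simp [he.extend_apply]
  · intro i _ hi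
    simp only [mem_map, mem_univ, true_and, Function.Embedding.coeFn_mk] at hi
    simp [Function.extend_apply' _ _ _ hi]

lemma prod_range_one_sub_div {n k : ℕ} (hk : k ≤ n) :
    ∏ i ∈ range k, (1 - (i : ℝ) / n) = n.descFactorial k / n ^ k := by
  induction k with
  | zero => simp
  | succ k ih =>
    have hn : (n : ℝ) ≠ 0 := Nat.cast_ne_zero.2 (by omega)
    rw [prod_range_succ, ih (by omega), Nat.descFactorial_succ, Nat.cast_mul,
      Nat.cast_sub (by omega)]
    field_simp
    ring

lemma choose_mul_div_pow {n k : ℕ} (hk : k ≤ n) (c : ℝ) :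
    (n.choose k : ℝ) * (c / n) ^ k
      = c ^ k / k.factorial * ∏ i ∈ range k, (1 - (i : ℝ) / n) := by
  rw [prod_range_one_sub_div hk, Nat.descFactorial_eq_factorial_mul_choose, Nat.cast_mul,
    div_pow]
  field_simp

lemma volume_restrict_Icc_Ioi_one_sub {a : ℝ} (ha : a ≤ 1) :
    volume.restrict (Set.Icc (0 : ℝ) 1) (Set.Ioi (1 - a)) = ENNReal.ofReal a := by
  have hIoc : Set.Ioi (1 - a) ∩ Set.Icc 0 1 = Set.Ioc (1 - a) 1 := by
    ext s
    simp only [Set.mem_inter_iff, Set.mem_Ioi, Set.mem_Icc, Set.mem_Ioc]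
    constructor
    · rintro ⟨h1, -, h2⟩
      exact ⟨h1, h2⟩
    · rintro ⟨h1, h2⟩
      exact ⟨h1, by linarith, h2⟩
  rw [Measure.restrict_apply measurableSet_Ioi, hIoc, Real.volume_Ioc, sub_sub_cancel]

section BoltzmannFactor

variable {ι X : Type*} [LinearOrder ι]

noncomputable def boltzmannFactor (φ : X → X → ℝ) (s : Finset ι) (x : ι → X) : ℝ :=
  ∏ p ∈ (s ×ˢ s).filter (fun p => p.1 < p.2), Real.exp (-φ (x p.1) (x p.2))

lemma boltzmannFactor_map {κ : Type*} [LinearOrder κ] (φ : X → X → ℝ) (e : κ ↪o ι)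
    (s : Finset κ) (x : ι → X) :
    boltzmannFactor φ (s.map e.toEmbedding) x = boltzmannFactor φ s (x ∘ e) := by
  symm
  refine prod_bij (fun q _ => (e q.1, e q.2)) ?_ ?_ ?_ fun _ _ => rfl
  · intro q hq
    simp only [mem_filter, mem_product] at hq
    simp [hq]
  · intro q _ r _ h
    simp only [Prod.mk.injEq, e.injective.eq_iff] at h
    exact Prod.ext h.1 h.2
  · rintro ⟨i, j⟩ hp
    simp only [mem_filter, mem_product, mem_map, RelEmbedding.coe_toEmbedding] at hp
    obtain ⟨⟨⟨a, ha, rfl⟩, ⟨b, hb, rfl⟩⟩, hab⟩ := hp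
    exact ⟨(a, b), by simpa [ha, hb] using hab, rfl⟩

variable [MeasurableSpace X]

lemma measurable_boltzmannFactor {φ : X → X → ℝ} (hφ : Measurable (Function.uncurry φ))
    (s : Finset ι) : Measurable (boltzmannFactor φ s) :=
  Finset.measurable_prod _ fun p _ =>
    (show Measurable fun x : ι → X => Function.uncurry φ (x p.1, x p.2) from
      hφ.comp (by fun_prop)).neg.exp

lemma integral_boltzmannFactor_eq_integral_fin [Fintype ι] {φ : X → X → ℝ}
    (hφ : Measurable (Function.uncurry φ)) (μ : Measure X) [IsProbabilityMeasure μ]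
    (s : Finset ι) :
    ∫ x, boltzmannFactor φ s x ∂(Measure.pi fun _ => μ)
      = ∫ y : Fin s.card → X, boltzmannFactor φ univ y ∂(Measure.pi fun _ => μ) := by
  have he := measurePreserving_pi_comp_of_injective μ (s.orderEmbOfFin rfl).injective
  conv_lhs => rw [← s.map_orderEmbOfFin_univ rfl]
  simp_rw [boltzmannFactor_map]
  rw [← he.map_eq, integral_map he.measurable.aemeasurable
    (measurable_boltzmannFactor hφ _).aestronglyMeasurable]

end BoltzmannFactor

section RandomGraph

variable {X : Type*} {n : ℕ}

def indepSetEvent (φ : X → X → ℝ) (I : Finset (Fin n)) :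
    Set ((Fin n → X) × (Fin n × Fin n → ℝ)) :=
  {ω | ∀ i ∈ I, ∀ j ∈ I, ¬ edgeOcc φ ω i j}

lemma preimage_prodMk_indepSetEvent (φ : X → X → ℝ) (I : Finset (Fin n)) (x : Fin n → X) :
    Prod.mk x ⁻¹' indepSetEvent φ I
      = Set.univ.pi fun p : Fin n × Fin n =>
          if p ∈ (I ×ˢ I).filter (fun p => p.1 < p.2) then
            Set.Ioi (1 - Real.exp (-φ (x p.1) (x p.2)))
          else Set.univ := by
  ext t
  simp only [indepSetEvent, edgeOcc, not_or, not_and, not_le, Set.preimage_ofPred_eq,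
    Set.mem_ofPred_eq, mem_filter, mem_product, Set.mem_pi, Set.mem_univ, Set.mem_ite_univ_right,
    Set.mem_Ioi, and_imp, forall_const, Prod.forall]
  exact ⟨fun h a b ha hb => (h a ha b hb).1, fun h i hi j hj => ⟨h i j hi hj, h j i hj hi⟩⟩

lemma pi_preimage_prodMk_indepSetEvent {φ : X → X → ℝ} (hφ0 : ∀ x y, 0 ≤ φ x y)
    (I : Finset (Fin n)) (x : Fin n → X) :
    (Measure.pi fun _ : Fin n × Fin n => volume.restrict (Set.Icc (0 : ℝ) 1))
        (Prod.mk x ⁻¹' indepSetEvent φ I)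
      = ENNReal.ofReal (boltzmannFactor φ I x) := by
  rw [preimage_prodMk_indepSetEvent, Measure.pi_pi]
  simp only [apply_ite (volume.restrict (Set.Icc (0 : ℝ) 1)), Measure.restrict_apply_univ,
    Real.volume_Icc, sub_zero, ENNReal.ofReal_one,
    volume_restrict_Icc_Ioi_one_sub (Real.exp_le_one_iff.2 (neg_nonpos.2 (hφ0 _ _))),
    Fintype.prod_extend_by_one]
  rw [boltzmannFactor, ENNReal.ofReal_prod_of_nonneg fun p _ => (Real.exp_pos _).le]

lemma hcZrand_eq_sum_indicator (φ : X → X → ℝ) (z : ℝ)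
    (ω : (Fin n → X) × (Fin n × Fin n → ℝ)) :
    hcZrand φ z ω
      = ∑ I : Finset (Fin n), (indepSetEvent φ I).indicator (fun _ => z ^ #I) ω := by
  classical
  refine sum_congr rfl fun I _ => ?_
  rw [Set.indicator_apply]
  exact if_congr Iff.rfl rfl rfl

variable [MeasurableSpace X]

lemma measurableSet_indepSetEvent {φ : X → X → ℝ} (hφ : Measurable (Function.uncurry φ))
    (I : Finset (Fin n)) : MeasurableSet (indepSetEvent φ I) := by
  have hlabel : ∀ i j : Fin n, Measurable fun ω : (Fin n → X) × (Fin n × Fin n → ℝ) =>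
      ω.2 (i, j) ≤ 1 - Real.exp (-φ (ω.1 i) (ω.1 j)) := fun i j =>
    measurableSet_setOfPred.1 <| measurableSet_le (by fun_prop) <| measurable_const.sub
      (show Measurable fun ω : (Fin n → X) × (Fin n × Fin n → ℝ) =>
        Function.uncurry φ (ω.1 i, ω.1 j) from hφ.comp (by fun_prop)).neg.exp
  have hedge : ∀ i j : Fin n, Measurable fun ω => edgeOcc φ ω i j := fun i j =>
    (measurable_const.and (hlabel i j)).or (measurable_const.and (hlabel j i))
  exact measurableSet_setOfPred.2 <| Measurable.forall fun i => measurable_const.imp <|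
    Measurable.forall fun j => measurable_const.imp (hedge i j).not

lemma measureReal_indepSetEvent {φ : X → X → ℝ} (hφ : Measurable (Function.uncurry φ))
    (hφ0 : ∀ x y, 0 ≤ φ x y) (P : Measure (Fin n → X)) (I : Finset (Fin n)) :
    (P.prod (Measure.pi fun _ => volume.restrict (Set.Icc (0 : ℝ) 1))).real
        (indepSetEvent φ I)
      = ∫ x, boltzmannFactor φ I x ∂P := by
  rw [measureReal_def, Measure.prod_apply (measurableSet_indepSetEvent hφ I),
    integral_eq_lintegral_of_nonneg_ae (f := boltzmannFactor φ I)
      (.of_forall fun x => prod_nonneg fun p _ => (Real.exp_pos _).le)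
      (measurable_boltzmannFactor hφ I).aestronglyMeasurable]
  simp_rw [pi_preimage_prodMk_indepSetEvent hφ0]

lemma integral_hcZrand {φ : X → X → ℝ} (hφ : Measurable (Function.uncurry φ))
    (hφ0 : ∀ x y, 0 ≤ φ x y) (μ : Measure X) [IsProbabilityMeasure μ]
    (u : Measure ℝ) [IsProbabilityMeasure u] (hu : u = volume.restrict (Set.Icc (0 : ℝ) 1))
    (z : ℝ) :
    ∫ ω, hcZrand φ z ω
        ∂((Measure.pi fun _ : Fin n => μ).prod (Measure.pi fun _ : Fin n × Fin n => u))
      = ∑ k ∈ range (n + 1), (n.choose k : ℝ) * z ^ k *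
          ∫ y : Fin k → X, boltzmannFactor φ univ y ∂(Measure.pi fun _ => μ) := by
  subst hu
  have hA := measurableSet_indepSetEvent hφ (n := n)
  simp_rw [hcZrand_eq_sum_indicator]
  rw [integral_finsetSum _ fun I _ => (integrable_const _).indicator (hA I)]
  simp_rw [integral_indicator_const _ (hA _), measureReal_indepSetEvent hφ hφ0, smul_eq_mul]
  rw [sum_congr rfl fun I _ => by rw [integral_boltzmannFactor_eq_integral_fin hφ]]
  rw [← powerset_univ, sum_powerset_apply_card
    (fun k => (∫ y : Fin k → X, boltzmannFactor φ univ y ∂(Measure.pi fun _ => μ)) * z ^ k),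
    card_univ, Fintype.card_fin]
  exact sum_congr rfl fun k _ => by rw [nsmul_eq_mul]; ring

end RandomGraph

theorem expected_hcZ_eq_general {X : Type*} [MeasurableSpace X]
    (ν : Measure X) (V : Set X)
    [Fact (ν V < ⊤)] (hV0 : ν V ≠ 0)
    (φ : X → X → ℝ) (hφm : Measurable (Function.uncurry φ))
    (hφ0 : ∀ x y, 0 ≤ φ x y)
    (lam : ℝ)
    (μ : Measure X) [IsProbabilityMeasure μ] (hμ : μ = (ν V)⁻¹ • ν.restrict V)
    (u : Measure ℝ) [IsProbabilityMeasure u] (hu : u = volume.restrict (Set.Icc (0:ℝ) 1))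
    (n : ℕ) :
    (∫ ω, hcZrand φ (lam * (ν V).toReal / n) ω
        ∂ ((Measure.pi fun _ : Fin n => μ).prod (Measure.pi fun _ : Fin n × Fin n => u)))
      = 1 + ∑ k ∈ Finset.Icc 1 n,
          (lam ^ k / (Nat.factorial k : ℝ)) *
          (∏ i ∈ Finset.range k, (1 - (i : ℝ) / n)) *
          ∫ y : Fin k → X,
            ∏ q ∈ Finset.univ.filter (fun q : Fin k × Fin k => q.1 < q.2),
              Real.exp (-φ (y q.1) (y q.2)) ∂ Measure.pi (fun _ : Fin k => ν.restrict V) := by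
  have hVol : (ν V).toReal ≠ 0 := ENNReal.toReal_ne_zero.2 ⟨hV0, (Fact.out : ν V < ⊤).ne⟩
  rw [integral_hcZrand hφm hφ0 μ u hu, range_eq_Ico,
    sum_eq_sum_Ico_succ_bot (by omega : 0 < n + 1), zero_add, Ico_add_one_right_eq_Icc]
  subst hμ
  congr 1
  · simp [boltzmannFactor]
  · refine sum_congr rfl fun k hk => ?_
    rw [Measure.pi_const_smul, integral_smul_measure, Fintype.card_fin, ENNReal.toReal_pow,
      ENNReal.toReal_inv, smul_eq_mul, choose_mul_div_pow (mem_Icc.1 hk).2, mul_pow,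
      inv_pow]
    simp only [boltzmannFactor, univ_product_univ]
    field_simp

/-- Expected hard-core partition function of the geometric random graph `G ~ D_n(V, φ)` at
activity `λ Vol / n` equals
`1 + Σ_{k=1}^n (λ^k / k!) Π_{i=0}^{k-1}(1 − i/n) ∫_{V^k} Π_{i<j} e^{−φ(x_i,x_j)} dν^k`. -/
theorem expected_hcZ_eq {X : Type*} [MeasurableSpace X]
    (ν : Measure X) (V : Set X) (hV : MeasurableSet V)
    [Fact (ν V < ⊤)] (hV0 : ν V ≠ 0)
    (φ : X → X → ℝ) (hφm : Measurable (Function.uncurry φ))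
    (hφ0 : ∀ x y, 0 ≤ φ x y) (hφsym : ∀ x y, φ x y = φ y x)
    (lam : ℝ) (hlam : 0 ≤ lam)
    (μ : Measure X) [IsProbabilityMeasure μ] (hμ : μ = (ν V)⁻¹ • ν.restrict V)
    (u : Measure ℝ) [IsProbabilityMeasure u] (hu : u = volume.restrict (Set.Icc (0:ℝ) 1))
    (n : ℕ) (hn : 0 < n) :
    (∫ ω, hcZrand φ (lam * (ν V).toReal / n) ω
        ∂ ((Measure.pi fun _ : Fin n => μ).prod (Measure.pi fun _ : Fin n × Fin n => u)))
      = 1 + ∑ k ∈ Finset.Icc 1 n,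
          (lam ^ k / (Nat.factorial k : ℝ)) *
          (∏ i ∈ Finset.range k, (1 - (i : ℝ) / n)) *
          ∫ y : Fin k → X,
            ∏ q ∈ Finset.univ.filter (fun q : Fin k × Fin k => q.1 < q.2),
              Real.exp (-φ (y q.1) (y q.2)) ∂ Measure.pi (fun _ : Fin k => ν.restrict V) :=
  expected_hcZ_eq_general ν V hV0 φ hφm hφ0 lam μ hμ u hu n
end

section
/- For G ~ D_n(V, φ), all ε > 0, and n ≥ 2ε⁻¹ max{e⁶λ²Vol², ln(2ε⁻¹)²}, the expected hard-core partition function satisfies (1 − ε)·Ξ(V, λ, φ) ≤ E[Z_G(λVol/n)] ≤ Ξ(V, λ, φ), where Ξ(V, λ, φ) = 1 + Σ_{k≥1} (λ^k/k!) ∫_{V^k} Π_{{i,j}∈binom([k],2)} e^{−φ(x_i,x_j)} dν^k(x) is the Gibbs point process partition function. -/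
open MeasureTheory

/-- Grand-canonical partition function of the repulsive Gibbs point process:
`Ξ(V, λ, φ) = 1 + Σ_{k ≥ 1} (λ^k/k!) ∫_{V^k} Π_{i<j} e^{−φ(x_i,x_j)} dν^k`. -/
noncomputable def gppXi {X : Type*} [MeasurableSpace X] (ν : Measure X) (V : Set X)
    [Fact (ν V < ⊤)] (φ : X → X → ℝ) (lam : ℝ) : ℝ :=
  1 + ∑' k : ℕ, (lam ^ (k + 1) / (Nat.factorial (k + 1) : ℝ)) *
    ∫ y : Fin (k + 1) → X,
      ∏ q ∈ Finset.univ.filter (fun q : Fin (k + 1) × Fin (k + 1) => q.1 < q.2),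
        Real.exp (-φ (y q.1) (y q.2)) ∂ Measure.pi (fun _ : Fin (k + 1) => ν.restrict V)

/-!
Write `c = λ Vol` and let `J m = E_{μ^m}[∏_{i<j} e^{-φ(x_i,x_j)}]` be the normalised configuration
integral, so that `Ξ = ∑ₘ cᵐ/m! · J m`. Integrating out the uniform edge labels first, a fixed
`m`-set is independent with conditional probability `∏_{i<j} e^{-φ(x_i,x_j)}`, hence
`E[Z_G(c/n)] = ∑ₘ C(n,m) (c/n)ᵐ J m = ∑ₘ (n)ₘ/nᵐ · cᵐ/m! · J m`.
Since `1 - C(m,2)/n ≤ (n)ₘ/nᵐ ≤ 1` and `J` is antitone (dropping a point only removes factors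
`≤ 1`), the two series differ by at most `∑ₘ C(m,2)/n · cᵐ/m! · J m ≤ c²/(2n) · Ξ ≤ ε Ξ`.
-/

open Finset

namespace HardCoreGibbs

section BoltzmannWeight

variable {X ι : Type*} {φ : X → X → ℝ}

noncomputable def boltzmannWeight (φ : X → X → ℝ) (S : Finset (ι × ι)) (x : ι → X) : ℝ :=
  ∏ q ∈ S, Real.exp (-φ (x q.1) (x q.2))

def increasingPairs [LinearOrder ι] (I : Finset ι) : Finset (ι × ι) :=
  (I ×ˢ I).filter fun q => q.1 < q.2

lemma increasingPairs_univ [Fintype ι] [LinearOrder ι] :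
    increasingPairs (univ : Finset ι) = univ.filter fun q : ι × ι => q.1 < q.2 := by
  simp [increasingPairs]

lemma increasingPairs_mono [LinearOrder ι] {I J : Finset ι} (h : I ⊆ J) :
    increasingPairs I ⊆ increasingPairs J :=
  filter_subset_filter _ (product_subset_product h h)

lemma boltzmannWeight_nonneg (S : Finset (ι × ι)) (x : ι → X) : 0 ≤ boltzmannWeight φ S x :=
  prod_nonneg fun _ _ => (Real.exp_pos _).le

lemma exp_neg_le_one (hφ0 : ∀ x y, 0 ≤ φ x y) (x y : X) : Real.exp (-φ x y) ≤ 1 :=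
  Real.exp_le_one_iff.2 (neg_nonpos.2 (hφ0 x y))

lemma boltzmannWeight_le_one (hφ0 : ∀ x y, 0 ≤ φ x y) (S : Finset (ι × ι)) (x : ι → X) :
    boltzmannWeight φ S x ≤ 1 :=
  prod_le_one (fun _ _ => (Real.exp_pos _).le) fun _ _ => exp_neg_le_one hφ0 _ _

lemma boltzmannWeight_anti (hφ0 : ∀ x y, 0 ≤ φ x y) {S T : Finset (ι × ι)} (hST : S ⊆ T)
    (x : ι → X) : boltzmannWeight φ T x ≤ boltzmannWeight φ S x :=
  prod_le_prod_of_subset_of_le_one hST (fun _ _ => (Real.exp_pos _).le)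
    fun _ _ _ => exp_neg_le_one hφ0 _ _

lemma increasingPairs_map {κ ι : Type*} [LinearOrder κ] [LinearOrder ι] (e : κ ↪o ι)
    (s : Finset κ) :
    increasingPairs (s.map e.toEmbedding)
      = (increasingPairs s).map (e.toEmbedding.prodMap e.toEmbedding) := by
  rw [increasingPairs, increasingPairs, ← prodMap_map_product, filter_map]
  congr 1
  exact filter_congr fun q _ => e.lt_iff_lt

lemma boltzmannWeight_increasingPairs_map {κ ι : Type*} [LinearOrder κ] [LinearOrder ι]
    (e : κ ↪o ι) (s : Finset κ) (x : ι → X) :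
    boltzmannWeight φ (increasingPairs (s.map e.toEmbedding)) x
      = boltzmannWeight φ (increasingPairs s) (x ∘ e) := by
  rw [boltzmannWeight, increasingPairs_map, prod_map]
  rfl

variable [MeasurableSpace X]

lemma measurable_boltzmannWeight (hφm : Measurable (Function.uncurry φ))
    (S : Finset (ι × ι)) : Measurable (boltzmannWeight φ S) :=
  Finset.measurable_prod _ fun q _ =>
    (hφm.comp (f := fun x : ι → X => (x q.1, x q.2)) (by fun_prop)).neg.exp

lemma integrable_boltzmannWeight (hφm : Measurable (Function.uncurry φ))
    (hφ0 : ∀ x y, 0 ≤ φ x y) (S : Finset (ι × ι)) {P : Measure (ι → X)} [IsFiniteMeasure P] :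
    Integrable (boltzmannWeight φ S) P :=
  (integrable_const (1 : ℝ)).mono' (measurable_boltzmannWeight hφm S).aestronglyMeasurable
    (ae_of_all _ fun x => by
      rw [Real.norm_of_nonneg (boltzmannWeight_nonneg S x)]
      exact boltzmannWeight_le_one hφ0 S x)

end BoltzmannWeight

section Series

open scoped Nat

variable {J : ℕ → ℝ} {c : ℝ}

lemma pow_div_factorial_mul_nonneg (hJ0 : ∀ k, 0 ≤ J k) (hc : 0 ≤ c) (k : ℕ) :
    0 ≤ c ^ k / k ! * J k :=
  mul_nonneg (by positivity) (hJ0 k)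

lemma summable_pow_div_factorial_mul (hJ0 : ∀ k, 0 ≤ J k) (hJ1 : ∀ k, J k ≤ 1) (hc : 0 ≤ c) :
    Summable fun k => c ^ k / k ! * J k :=
  (Real.summable_pow_div_factorial c).of_nonneg_of_le (pow_div_factorial_mul_nonneg hJ0 hc)
    fun k => mul_le_of_le_one_right (by positivity) (hJ1 k)

lemma descFactorial_div_pow_le_one (n k : ℕ) : (n.descFactorial k : ℝ) / n ^ k ≤ 1 :=
  div_le_one_of_le₀ (mod_cast n.descFactorial_le_pow k) (by positivity)

lemma one_sub_choose_two_div_le_descFactorial_div_pow {n : ℕ} (hn : 0 < n) :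
    ∀ k : ℕ, 1 - (k.choose 2 : ℝ) / n ≤ n.descFactorial k / n ^ k
  | 0 => by simp
  | k + 1 => by
    have hn' : (0 : ℝ) < n := by exact_mod_cast hn
    rw [Nat.choose_succ_succ', Nat.choose_one_right, Nat.descFactorial_succ, pow_succ]
    rcases le_or_gt k n with hk | hk
    · have ih := one_sub_choose_two_div_le_descFactorial_div_pow hn k
      have hfac : (0 : ℝ) ≤ 1 - k / n := by
        rw [sub_nonneg, div_le_one hn']; exact_mod_cast hk
      calc 1 - ((k + k.choose 2 : ℕ) : ℝ) / n
          ≤ (1 - (k.choose 2 : ℝ) / n) * (1 - k / n) := by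
            push_cast
            rw [add_div]
            nlinarith [mul_nonneg (div_nonneg (Nat.cast_nonneg (k.choose 2)) hn'.le)
              (div_nonneg (Nat.cast_nonneg k) hn'.le)]
        _ ≤ n.descFactorial k / n ^ k * (1 - k / n) := mul_le_mul_of_nonneg_right ih hfac
        _ = ((n - k) * n.descFactorial k : ℕ) / (n ^ k * n) := by
            push_cast [Nat.cast_sub hk]
            field_simp
    · have hsub : n - k = 0 := by omega
      rw [hsub, zero_mul, Nat.cast_zero, zero_div, sub_nonpos, le_div_iff₀ hn', one_mul]
      exact_mod_cast hk.le.trans (Nat.le_add_right k _)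

lemma choose_mul_div_pow (n m : ℕ) (c : ℝ) :
    n.choose m * (c / n) ^ m = n.descFactorial m / n ^ m * (c ^ m / m !) := by
  rw [Nat.descFactorial_eq_factorial_mul_choose, div_pow]
  push_cast
  have := m.factorial_pos
  field_simp

lemma choose_two_mul_pow_div_factorial (j : ℕ) (c : ℝ) :
    ((j + 2).choose 2 : ℝ) * (c ^ (j + 2) / (j + 2)!) = c ^ 2 / 2 * (c ^ j / j !) := by
  rw [Nat.cast_choose_two, Nat.factorial_succ, Nat.factorial_succ]
  push_cast
  have := j.factorial_pos
  field_simp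
  ring

lemma sum_choose_eq_tsum (n : ℕ) :
    ∑ m ∈ range (n + 1), n.choose m * (c / n) ^ m * J m
      = ∑' k, n.descFactorial k / n ^ k * (c ^ k / k ! * J k) := by
  rw [tsum_eq_sum (s := range (n + 1)) fun k hk => by
    rw [Nat.descFactorial_eq_zero_iff_lt.2 (by simpa [Nat.lt_succ_iff] using hk)]; simp]
  exact sum_congr rfl fun m _ => by rw [choose_mul_div_pow, mul_assoc]

lemma summable_descFactorial_div_pow_mul (hJ0 : ∀ k, 0 ≤ J k) (hJ1 : ∀ k, J k ≤ 1)
    (hc : 0 ≤ c) (n : ℕ) :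
    Summable fun k => n.descFactorial k / n ^ k * (c ^ k / k ! * J k) :=
  (summable_pow_div_factorial_mul hJ0 hJ1 hc).of_nonneg_of_le
    (fun k => mul_nonneg (by positivity) (pow_div_factorial_mul_nonneg hJ0 hc k))
    fun k => mul_le_of_le_one_left (pow_div_factorial_mul_nonneg hJ0 hc k)
      (descFactorial_div_pow_le_one n k)

lemma sum_choose_le_tsum (hJ0 : ∀ k, 0 ≤ J k) (hJ1 : ∀ k, J k ≤ 1) (hc : 0 ≤ c) (n : ℕ) :
    ∑ m ∈ range (n + 1), n.choose m * (c / n) ^ m * J m ≤ ∑' k, c ^ k / k ! * J k := by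
  rw [sum_choose_eq_tsum]
  exact (summable_descFactorial_div_pow_mul hJ0 hJ1 hc n).tsum_le_tsum
    (fun k => mul_le_of_le_one_left (pow_div_factorial_mul_nonneg hJ0 hc k)
      (descFactorial_div_pow_le_one n k))
    (summable_pow_div_factorial_mul hJ0 hJ1 hc)

lemma tsum_sub_sum_choose_le (hJ0 : ∀ k, 0 ≤ J k) (hJ1 : ∀ k, J k ≤ 1) (hJ : Antitone J)
    (hc : 0 ≤ c) {n : ℕ} (hn : 0 < n) :
    ∑' k, c ^ k / k ! * J k - ∑ m ∈ range (n + 1), n.choose m * (c / n) ^ m * J m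
      ≤ c ^ 2 / (2 * n) * ∑' k, c ^ k / k ! * J k := by
  set a : ℕ → ℝ := fun k => c ^ k / k ! * J k
  set r : ℕ → ℝ := fun k => n.descFactorial k / n ^ k
  have ha : Summable a := summable_pow_div_factorial_mul hJ0 hJ1 hc
  have hra : Summable fun k => r k * a k := summable_descFactorial_div_pow_mul hJ0 hJ1 hc n
  set b : ℕ → ℝ := fun k => (1 - r k) * a k
  have hb : ∑' k, a k - ∑' k, r k * a k = ∑' k, b k := by
    rw [← ha.tsum_sub hra]; simp only [b, sub_mul, one_mul]
  have hbs : Summable b := by simpa only [b, sub_mul, one_mul] using ha.sub hra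
  -- `r 0 = r 1 = 1`, so the series of `b` starts at `k = 2`
  have hshift : ∑' k, b k = ∑' j, b (j + 2) := by
    rw [← hbs.sum_add_tsum_nat_add 2]
    have hn' : (n : ℝ) ≠ 0 := by positivity
    simp [b, r, sum_range_succ, hn']
  have hbound : ∀ j, b (j + 2) ≤ c ^ 2 / (2 * n) * a j := fun j => calc
    b (j + 2) ≤ ((j + 2).choose 2 / n) * a (j + 2) := by
        refine mul_le_mul_of_nonneg_right ?_ (pow_div_factorial_mul_nonneg hJ0 hc _)
        linarith [one_sub_choose_two_div_le_descFactorial_div_pow hn (j + 2)]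
    _ = c ^ 2 / (2 * n) * (c ^ j / j ! * J (j + 2)) := by
        rw [show (j + 2).choose 2 / (n : ℝ) * a (j + 2)
            = (j + 2).choose 2 * (c ^ (j + 2) / (j + 2)!) * J (j + 2) / n by simp only [a]; ring,
          choose_two_mul_pow_div_factorial]
        ring
    _ ≤ c ^ 2 / (2 * n) * a j := by
        simp only [a]
        gcongr
        exact hJ (Nat.le_add_right j 2)
  rw [sum_choose_eq_tsum, hb, hshift, ← tsum_mul_left]
  exact ((summable_nat_add_iff 2).2 hbs).tsum_le_tsum hbound (ha.mul_left _)

lemma one_sub_mul_tsum_le_sum_choose (hJ0 : ∀ k, 0 ≤ J k) (hJ1 : ∀ k, J k ≤ 1)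
    (hJ : Antitone J) (hc : 0 ≤ c) {ε : ℝ} (hε : 0 ≤ ε) {n : ℕ} (hcn : c ^ 2 ≤ 2 * ε * n) :
    (1 - ε) * ∑' k, c ^ k / k ! * J k
      ≤ ∑ m ∈ range (n + 1), n.choose m * (c / n) ^ m * J m := by
  rcases n.eq_zero_or_pos with rfl | hn
  · obtain rfl : c = 0 := by simpa using hcn
    rw [tsum_eq_single 0 fun k hk => by simp [hk]]
    simpa using mul_le_of_le_one_left (hJ0 0) (sub_le_self 1 hε)
  · have hcε : c ^ 2 / (2 * n) ≤ ε := by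
      rw [div_le_iff₀ (by positivity)]; linarith
    have := tsum_sub_sum_choose_le hJ0 hJ1 hJ hc hn
    have hΞ : 0 ≤ ∑' k, c ^ k / k ! * J k := tsum_nonneg (pow_div_factorial_mul_nonneg hJ0 hc)
    nlinarith

end Series

section ConfigIntegral

variable {X : Type*} [MeasurableSpace X] {φ : X → X → ℝ}

lemma measurePreserving_comp_embedding {κ ι : Type*} [Fintype κ] [Fintype ι] (e : κ ↪ ι)
    (μ : Measure X) [IsProbabilityMeasure μ] :
    MeasurePreserving (fun x : ι → X => x ∘ e) (Measure.pi fun _ => μ)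
      (Measure.pi fun _ => μ) := by
  classical
  let p : ι → Prop := (· ∈ Set.range e)
  let _ : Fintype (Subtype p) := Subtype.fintype p
  have restrict := measurePreserving_piEquivPiSubtypeProd (fun _ : ι => μ) p
  have fst : MeasurePreserving Prod.fst
      ((Measure.pi fun _ : Subtype p => μ).prod (Measure.pi fun _ : {i // ¬ p i} => μ))
      (Measure.pi fun _ : Subtype p => μ) :=
    ⟨measurable_fst, by simp⟩
  have reindex := (measurePreserving_piCongrLeft (fun _ : Subtype p => μ)
    (Equiv.ofInjective e e.injective)).symm
    (MeasurableEquiv.piCongrLeft (fun _ => X) (Equiv.ofInjective e e.injective))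
  convert (reindex.comp fst).comp restrict using 1
  ext x k
  simp [MeasurableEquiv.piCongrLeft, Equiv.piCongrLeft_symm_apply, p]

noncomputable def configIntegral (φ : X → X → ℝ) (μ : Measure X) (k : ℕ) : ℝ :=
  ∫ y, boltzmannWeight φ (increasingPairs univ) y ∂Measure.pi fun _ : Fin k => μ

lemma integral_boltzmannWeight_increasingPairs (hφm : Measurable (Function.uncurry φ))
    (μ : Measure X) [IsProbabilityMeasure μ] {ι : Type*} [Fintype ι] [LinearOrder ι]
    (I : Finset ι) :
    ∫ x, boltzmannWeight φ (increasingPairs I) x ∂Measure.pi (fun _ : ι => μ)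
      = configIntegral φ μ #I := by
  set e := I.orderEmbOfFin rfl
  have hmp := measurePreserving_comp_embedding e.toEmbedding μ
  calc ∫ x, boltzmannWeight φ (increasingPairs I) x ∂Measure.pi (fun _ : ι => μ)
      = ∫ x, boltzmannWeight φ (increasingPairs univ) (x ∘ e) ∂Measure.pi (fun _ : ι => μ) := by
        congr with x
        rw [← boltzmannWeight_increasingPairs_map, map_orderEmbOfFin_univ]
    _ = configIntegral φ μ #I := by
        rw [configIntegral, ← hmp.map_eq,
          integral_map hmp.aemeasurable (measurable_boltzmannWeight hφm _).aestronglyMeasurable]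
        rfl

lemma configIntegral_zero (μ : Measure X) [IsProbabilityMeasure μ] :
    configIntegral φ μ 0 = 1 := by
  simp [configIntegral, boltzmannWeight, increasingPairs]

lemma configIntegral_nonneg (μ : Measure X) (k : ℕ) : 0 ≤ configIntegral φ μ k :=
  integral_nonneg fun x => boltzmannWeight_nonneg _ x

lemma configIntegral_le_one (hφm : Measurable (Function.uncurry φ)) (hφ0 : ∀ x y, 0 ≤ φ x y)
    (μ : Measure X) [IsProbabilityMeasure μ] (k : ℕ) : configIntegral φ μ k ≤ 1 := by
  refine (integral_mono (integrable_boltzmannWeight hφm hφ0 _) (integrable_const 1)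
    fun x => boltzmannWeight_le_one hφ0 _ x).trans ?_
  simp

lemma configIntegral_antitone (hφm : Measurable (Function.uncurry φ)) (hφ0 : ∀ x y, 0 ≤ φ x y)
    (μ : Measure X) [IsProbabilityMeasure μ] : Antitone (configIntegral φ μ) := by
  refine antitone_nat_of_succ_le fun k => ?_
  let P := Measure.pi fun _ : Fin (k + 1) => μ
  calc configIntegral φ μ (k + 1) = ∫ x, boltzmannWeight φ (increasingPairs univ) x ∂P := rfl
    _ ≤ ∫ x, boltzmannWeight φ (increasingPairs (univ.erase (Fin.last k))) x ∂P :=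
        integral_mono (integrable_boltzmannWeight hφm hφ0 _) (integrable_boltzmannWeight hφm hφ0 _)
          (boltzmannWeight_anti hφ0 (increasingPairs_mono (erase_subset _ _)))
    _ = configIntegral φ μ k := by simp [P, integral_boltzmannWeight_increasingPairs hφm μ]

lemma restrict_eq_smul_of_eq_inv_smul {ν μ : Measure X} {V : Set X} [Fact (ν V < ⊤)]
    (hμ : μ = (ν V)⁻¹ • ν.restrict V) : ν.restrict V = ν V • μ := by
  by_cases h0 : ν V = 0
  · rw [Measure.restrict_eq_zero.2 h0, h0, zero_smul]
  · rw [hμ, smul_smul, ENNReal.mul_inv_cancel h0 (Fact.out : ν V < ⊤).ne, one_smul]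

lemma pi_eq_pow_smul_pi {ι : Type*} [Fintype ι] {ρ μ : Measure X} [SigmaFinite ρ]
    [SigmaFinite μ] {a : ENNReal} (h : ρ = a • μ) :
    Measure.pi (fun _ : ι => ρ) = a ^ Fintype.card ι • Measure.pi fun _ => μ :=
  Measure.pi_eq fun s _ => by simp [h, Measure.pi_pi, prod_mul_distrib]

lemma gppXi_eq_tsum (ν : Measure X) (V : Set X) [Fact (ν V < ⊤)]
    (hφm : Measurable (Function.uncurry φ)) (hφ0 : ∀ x y, 0 ≤ φ x y) {lam : ℝ} (hlam : 0 ≤ lam)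
    {μ : Measure X} [IsProbabilityMeasure μ] (hμ : μ = (ν V)⁻¹ • ν.restrict V) :
    gppXi ν V φ lam = ∑' k, (lam * (ν V).toReal) ^ k / k.factorial * configIntegral φ μ k := by
  have hterm : ∀ k, (lam ^ k / k.factorial : ℝ) * ∫ y : Fin k → X,
      ∏ q ∈ univ.filter (fun q : Fin k × Fin k => q.1 < q.2), Real.exp (-φ (y q.1) (y q.2))
        ∂Measure.pi (fun _ => ν.restrict V)
      = (lam * (ν V).toReal) ^ k / k.factorial * configIntegral φ μ k := fun k => by
    rw [pi_eq_pow_smul_pi (restrict_eq_smul_of_eq_inv_smul hμ), integral_smul_measure,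
      ← increasingPairs_univ]
    simp only [configIntegral, boltzmannWeight, Fintype.card_fin, ENNReal.toReal_pow, smul_eq_mul]
    ring
  have hs := summable_pow_div_factorial_mul (configIntegral_nonneg μ)
    (configIntegral_le_one hφm hφ0 μ) (mul_nonneg hlam (ν V).toReal_nonneg)
  rw [gppXi, hs.tsum_eq_zero_add, configIntegral_zero]
  simp [hterm]

end ConfigIntegral

section RandomGraph

variable {X : Type*} {φ : X → X → ℝ} {n : ℕ}

def indepSet (φ : X → X → ℝ) (I : Finset (Fin n)) : Set ((Fin n → X) × (Fin n × Fin n → ℝ)) :=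
  {ω | ∀ i ∈ I, ∀ j ∈ I, ¬ edgeOcc φ ω i j}

lemma hcZrand_eq_sum_indicator (z : ℝ) (ω : (Fin n → X) × (Fin n × Fin n → ℝ)) :
    hcZrand φ z ω = ∑ I, (indepSet φ I).indicator (fun _ => z ^ #I) ω := by
  classical
  refine sum_congr rfl fun I _ => ?_
  rw [Set.indicator_apply]
  congr

lemma preimage_mk_indepSet (x : Fin n → X) (I : Finset (Fin n)) :
    Prod.mk x ⁻¹' indepSet φ I = Set.univ.pi fun q => if q ∈ increasingPairs I
      then Set.Ioi (1 - Real.exp (-φ (x q.1) (x q.2))) else Set.univ := by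
  ext t
  simp only [Set.mem_preimage, indepSet, Set.mem_univ_pi]
  constructor
  · intro hindep q
    split_ifs with hq
    · simp only [increasingPairs, mem_filter, mem_product] at hq
      have := hindep q.1 hq.1.1 q.2 hq.1.2
      simp only [edgeOcc, not_or, not_and, not_le] at this
      exact this.1 hq.2
    · trivial
  · rintro ht i hi j hj (⟨hij, hle⟩ | ⟨hji, hle⟩)
    · have := ht (i, j)
      rw [if_pos (by simp [increasingPairs, hi, hj, hij])] at this
      exact (not_le.2 this) hle
    · have := ht (j, i)
      rw [if_pos (by simp [increasingPairs, hi, hj, hji])] at this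
      exact (not_le.2 this) hle

variable [MeasurableSpace X]

lemma measurableSet_indepSet (hφm : Measurable (Function.uncurry φ)) (I : Finset (Fin n)) :
    MeasurableSet (indepSet φ I) := by
  have hle : ∀ a b : Fin n, Measurable fun ω : (Fin n → X) × (Fin n × Fin n → ℝ) =>
      ω.2 (a, b) ≤ 1 - Real.exp (-φ (ω.1 a) (ω.1 b)) := fun a b =>
    measurableSet_setOfPred.1 <| measurableSet_le (by fun_prop)
      (measurable_const.sub (hφm.comp (f := fun ω : (Fin n → X) × (Fin n × Fin n → ℝ) =>
        (ω.1 a, ω.1 b)) (by fun_prop)).neg.exp)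
  have hedge : ∀ i j : Fin n, Measurable fun ω => edgeOcc φ ω i j := fun i j =>
    (measurable_const.and (hle i j)).or (measurable_const.and (hle j i))
  exact measurableSet_setOfPred.2 <| Measurable.forall fun i => measurable_const.imp <|
    Measurable.forall fun j => measurable_const.imp (hedge i j).not

lemma uniform_Ioi_one_sub {u : Measure ℝ} (hu : u = volume.restrict (Set.Icc (0 : ℝ) 1))
    {w : ℝ} (hw1 : w ≤ 1) : u (Set.Ioi (1 - w)) = ENNReal.ofReal w := by
  have : Set.Ioi (1 - w) ∩ Set.Icc 0 1 = Set.Ioc (1 - w) 1 := by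
    ext s
    simp only [Set.mem_inter_iff, Set.mem_Ioi, Set.mem_Icc, Set.mem_Ioc]
    constructor
    · rintro ⟨h, -, h1⟩; exact ⟨h, h1⟩
    · rintro ⟨h, h1⟩; exact ⟨h, by linarith, h1⟩
  rw [hu, Measure.restrict_apply measurableSet_Ioi, this, Real.volume_Ioc, sub_sub_cancel]

lemma pi_uniform_pi_Ioi_one_sub {u : Measure ℝ} [IsProbabilityMeasure u]
    (hu : u = volume.restrict (Set.Icc (0 : ℝ) 1)) {κ : Type*} [Fintype κ] (S : Finset κ)
    [DecidablePred (· ∈ S)] {w : κ → ℝ} (hw0 : ∀ q ∈ S, 0 ≤ w q) (hw1 : ∀ q ∈ S, w q ≤ 1) :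
    Measure.pi (fun _ : κ => u)
        (Set.univ.pi fun q => if q ∈ S then Set.Ioi (1 - w q) else Set.univ)
      = ENNReal.ofReal (∏ q ∈ S, w q) := by
  rw [Measure.pi_pi]
  calc ∏ q, u (if q ∈ S then Set.Ioi (1 - w q) else Set.univ)
      = ∏ q, if q ∈ S then ENNReal.ofReal (w q) else 1 :=
        prod_congr rfl fun q _ => by
          split_ifs with hq
          · exact uniform_Ioi_one_sub hu (hw1 q hq)
          · exact measure_univ
    _ = ENNReal.ofReal (∏ q ∈ S, w q) := by
        rw [prod_ite_mem_eq, ENNReal.ofReal_prod_of_nonneg hw0]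

lemma measureReal_indepSet (hφm : Measurable (Function.uncurry φ)) (hφ0 : ∀ x y, 0 ≤ φ x y)
    (μ : Measure X) [IsProbabilityMeasure μ] {u : Measure ℝ} [IsProbabilityMeasure u]
    (hu : u = volume.restrict (Set.Icc (0 : ℝ) 1)) (I : Finset (Fin n)) :
    ((Measure.pi fun _ : Fin n => μ).prod (Measure.pi fun _ : Fin n × Fin n => u)).real
        (indepSet φ I)
      = configIntegral φ μ #I := by
  classical
  have hslice : ∀ x, Measure.pi (fun _ : Fin n × Fin n => u) (Prod.mk x ⁻¹' indepSet φ I)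
      = ENNReal.ofReal (boltzmannWeight φ (increasingPairs I) x) := fun x => by
    rw [preimage_mk_indepSet, boltzmannWeight]
    exact pi_uniform_pi_Ioi_one_sub hu _ (fun _ _ => (Real.exp_pos _).le)
      fun _ _ => exp_neg_le_one hφ0 _ _
  rw [measureReal_def, Measure.prod_apply (measurableSet_indepSet hφm I),
    lintegral_congr fun x => hslice x, ← ofReal_integral_eq_lintegral_ofReal
      (integrable_boltzmannWeight hφm hφ0 _) (ae_of_all _ (boltzmannWeight_nonneg _)),
    ENNReal.toReal_ofReal (integral_nonneg (boltzmannWeight_nonneg _)),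
    integral_boltzmannWeight_increasingPairs hφm]

lemma integral_hcZrand (hφm : Measurable (Function.uncurry φ)) (hφ0 : ∀ x y, 0 ≤ φ x y)
    (μ : Measure X) [IsProbabilityMeasure μ] {u : Measure ℝ} [IsProbabilityMeasure u]
    (hu : u = volume.restrict (Set.Icc (0 : ℝ) 1)) (z : ℝ) :
    ∫ ω, hcZrand φ z ω
        ∂((Measure.pi fun _ : Fin n => μ).prod (Measure.pi fun _ : Fin n × Fin n => u))
      = ∑ m ∈ range (n + 1), n.choose m * z ^ m * configIntegral φ μ m := by
  simp_rw [hcZrand_eq_sum_indicator]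
  rw [integral_finsetSum _ fun I _ =>
    (integrable_const _).indicator (measurableSet_indepSet hφm I)]
  simp_rw [integral_indicator_const _ (measurableSet_indepSet hφm _),
    measureReal_indepSet hφm hφ0 μ hu, smul_eq_mul]
  rw [← powerset_univ, sum_powerset_apply_card (fun m => configIntegral φ μ m * z ^ m),
    card_univ, Fintype.card_fin]
  exact sum_congr rfl fun m _ => by rw [nsmul_eq_mul]; ring

end RandomGraph

end HardCoreGibbs

open HardCoreGibbs

theorem expected_hcZ_close_to_gppXi_general {X : Type*} [MeasurableSpace X]
    (ν : Measure X) (V : Set X)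
    [Fact (ν V < ⊤)]
    (φ : X → X → ℝ) (hφm : Measurable (Function.uncurry φ))
    (hφ0 : ∀ x y, 0 ≤ φ x y)
    (lam : ℝ) (hlam : 0 ≤ lam)
    (μ : Measure X) [IsProbabilityMeasure μ] (hμ : μ = (ν V)⁻¹ • ν.restrict V)
    (u : Measure ℝ) [IsProbabilityMeasure u] (hu : u = volume.restrict (Set.Icc (0:ℝ) 1))
    (ε : ℝ) (hε : 0 < ε) (n : ℕ)
    (hn : 2 * ε⁻¹ * max (Real.exp 6 * lam ^ 2 * (ν V).toReal ^ 2)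
        ((Real.log (2 * ε⁻¹)) ^ 2) ≤ n) :
    (1 - ε) * gppXi ν V φ lam
      ≤ (∫ ω, hcZrand φ (lam * (ν V).toReal / n) ω
          ∂ ((Measure.pi fun _ : Fin n => μ).prod
              (Measure.pi fun _ : Fin n × Fin n => u))) ∧
    (∫ ω, hcZrand φ (lam * (ν V).toReal / n) ω
        ∂ ((Measure.pi fun _ : Fin n => μ).prod
            (Measure.pi fun _ : Fin n × Fin n => u)))
      ≤ gppXi ν V φ lam := by
  set c := lam * (ν V).toReal
  have hc : 0 ≤ c := mul_nonneg hlam ENNReal.toReal_nonneg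
  have hcn : c ^ 2 ≤ 2 * ε * n := by
    have h := (mul_le_mul_of_nonneg_left (le_max_left _ _) (by positivity)).trans hn
    rw [← mul_le_mul_iff_of_pos_left hε, show ε * (2 * ε⁻¹ * (Real.exp 6 * lam ^ 2 *
      (ν V).toReal ^ 2)) = 2 * Real.exp 6 * c ^ 2 by field_simp; ring] at h
    nlinarith [Real.add_one_le_exp 6, sq_nonneg c]
  have hJ0 := configIntegral_nonneg (φ := φ) μ
  have hJ1 := configIntegral_le_one hφm hφ0 μ
  rw [integral_hcZrand hφm hφ0 μ hu, gppXi_eq_tsum ν V hφm hφ0 hlam hμ]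
  exact ⟨one_sub_mul_tsum_le_sum_choose hJ0 hJ1 (configIntegral_antitone hφm hφ0 μ) hc hε.le hcn,
    sum_choose_le_tsum hJ0 hJ1 hc n⟩

/-- For `n ≥ 2ε⁻¹ max{e⁶λ²Vol², ln(2ε⁻¹)²}`, the expected hard-core partition function of
the geometric random graph at activity `λ Vol / n` is between `(1−ε) Ξ(V,λ,φ)` and
`Ξ(V,λ,φ)`. -/
theorem expected_hcZ_close_to_gppXi {X : Type*} [MeasurableSpace X]
    (ν : Measure X) (V : Set X) (hV : MeasurableSet V)
    [Fact (ν V < ⊤)] (hV0 : ν V ≠ 0)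
    (φ : X → X → ℝ) (hφm : Measurable (Function.uncurry φ))
    (hφ0 : ∀ x y, 0 ≤ φ x y) (hφsym : ∀ x y, φ x y = φ y x)
    (lam : ℝ) (hlam : 0 ≤ lam)
    (μ : Measure X) [IsProbabilityMeasure μ] (hμ : μ = (ν V)⁻¹ • ν.restrict V)
    (u : Measure ℝ) [IsProbabilityMeasure u] (hu : u = volume.restrict (Set.Icc (0:ℝ) 1))
    (ε : ℝ) (hε : 0 < ε) (n : ℕ)
    (hn : 2 * ε⁻¹ * max (Real.exp 6 * lam ^ 2 * (ν V).toReal ^ 2)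
        ((Real.log (2 * ε⁻¹)) ^ 2) ≤ n) :
    (1 - ε) * gppXi ν V φ lam
      ≤ (∫ ω, hcZrand φ (lam * (ν V).toReal / n) ω
          ∂ ((Measure.pi fun _ : Fin n => μ).prod
              (Measure.pi fun _ : Fin n × Fin n => u))) ∧
    (∫ ω, hcZrand φ (lam * (ν V).toReal / n) ω
        ∂ ((Measure.pi fun _ : Fin n => μ).prod
            (Measure.pi fun _ : Fin n × Fin n => u)))
      ≤ gppXi ν V φ lam :=
  expected_hcZ_close_to_gppXi_general ν V φ hφm hφ0 lam hlam μ hμ u hu ε hε n hn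
end

section
/- With C_φ > 0 the temperedness constant, for all α > 0, q ∈ (0,1], n ≥ 3·max{α⁻¹, α⁻²}·ln(q⁻¹)·Vol/C_φ + 1, and G ~ D_n(V, φ), the maximum degree satisfies Pr[Δ(G) ≥ (1+α)·(n−1)·C_φ/Vol] ≤ q·n. -/
open MeasureTheory

open Classical in
/-- Degree of vertex `i` in the random graph determined by the outcome `ω`. -/
noncomputable def degOcc {X : Type*} {n : ℕ} (φ : X → X → ℝ)
    (ω : (Fin n → X) × (Fin n × Fin n → ℝ)) (i : Fin n) : ℕ :=
  (Finset.univ.filter fun j => edgeOcc φ ω i j).card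

/-!
Conditioned on the positions `x`, the edges at a vertex `i` are independent, the edge to `j`
being present with probability `1 - e^{-φ(x_i, x_j)}`, whose `μ`-average over `x_j` is at most
`β = C_φ / Vol`. Hence `E[(1+α)^{deg i}] ≤ (1 + αβ)^{n-1} ≤ e^{α(n-1)β}`, and Markov's inequality
gives `Pr[deg i ≥ (1+α)(n-1)β] ≤ (e^α / (1+α)^{1+α})^{(n-1)β}`. Since
`(1+α) log(1+α) - α ≥ min(α, α²)/3`, the lower bound on `n` makes this at most `q`; a union bound
over the `n` vertices finishes.
-/

open ProbabilityTheory Set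
open scoped ENNReal

theorem lintegral_pi_prod_comp_of_injective {ι κ E : Type*} [Fintype κ] [MeasurableSpace E]
    {u : Measure E} [IsProbabilityMeasure u] {e : ι → κ} (he : e.Injective)
    (f : ι → E → ℝ≥0∞) (hf : ∀ j, Measurable (f j)) (s : Finset ι) :
    ∫⁻ y, ∏ j ∈ s, f j (y (e j)) ∂Measure.pi (fun _ : κ => u) = ∏ j ∈ s, ∫⁻ t, f j t ∂u := by
  have hind : iIndepFun (fun j (y : κ → E) => f j (y (e j))) (Measure.pi fun _ => u) := by
    have := ((iIndepFun_pi (μ := fun _ : κ => u) (X := fun _ => id)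
      fun _ => aemeasurable_id).precomp he).comp f hf
    exact this
  rw [lintegral_prod_eq_prod_lintegral_of_indepFun s _ hind
    fun j => (hf j).comp (measurable_pi_apply _)]
  exact Finset.prod_congr rfl fun j _ => (measurePreserving_eval _ (e j)).lintegral_comp (hf j)

theorem lintegral_pi_prod_succAbove {X : Type*} [MeasurableSpace X] {μ : Measure X}
    [IsProbabilityMeasure μ] {m : ℕ} (i : Fin (m + 1)) {h : X → X → ℝ≥0∞}
    (hh : Measurable (Function.uncurry h)) :
    ∫⁻ x, ∏ k, h (x i) (x (i.succAbove k)) ∂Measure.pi (fun _ => μ)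
      = ∫⁻ a, (∫⁻ b, h a b ∂μ) ^ m ∂μ := by
  have hmeas : Measurable fun x : Fin (m + 1) → X => ∏ k, h (x i) (x (i.succAbove k)) := by
    fun_prop
  rw [← ((measurePreserving_piFinSuccAbove (fun _ => μ) i).symm _).lintegral_comp hmeas,
    lintegral_prod _ ?_]
  · refine lintegral_congr fun a => ?_
    simp only [MeasurableEquiv.piFinSuccAbove_symm_apply,
      Fin.insertNthEquiv, Equiv.coe_fn_mk, Fin.insertNth_apply_same,
      Fin.insertNth_apply_succAbove]
    exact (lintegral_pi_prod_comp_of_injective Function.injective_id (fun _ => h a)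
      (fun _ => hh.of_uncurry_left) Finset.univ).trans (by simp)
  · exact (hmeas.comp (MeasurableEquiv.measurable _)).aemeasurable

theorem volume_restrict_Icc_zero_one_Iic {p : ℝ} (hp : p ∈ Icc 0 1) :
    volume.restrict (Icc 0 1) (Iic p) = .ofReal p := by
  rw [Measure.restrict_apply measurableSet_Iic,
    show Iic p ∩ Icc 0 1 = Icc 0 p by ext; simp; grind, Real.volume_Icc, sub_zero]

theorem lintegral_ite_le_eq_of_measure_Iic {u : Measure ℝ} [IsProbabilityMeasure u] {p : ℝ}
    (hp : 0 ≤ p) (hu : u (Iic p) = .ofReal p) (c : ℝ≥0∞) :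
    ∫⁻ s, (if s ≤ p then c else 1) ∂u = c * .ofReal p + .ofReal (1 - p) := by
  rw [show (fun s : ℝ => if s ≤ p then c else 1) = (Iic p).piecewise (fun _ => c) (fun _ => 1)
    from rfl, lintegral_piecewise measurableSet_Iic, setLIntegral_const, setLIntegral_const,
    prob_compl_eq_one_sub measurableSet_Iic, hu, one_mul, ENNReal.ofReal_sub _ hp,
    ENNReal.ofReal_one]

theorem lintegral_ofReal_one_add_mul_le_exp {X : Type*} [MeasurableSpace X] {μ : Measure X}
    [IsProbabilityMeasure μ] {g : X → ℝ} (hg : Measurable g) (hg0 : ∀ y, 0 ≤ g y) {α β : ℝ}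
    (hα : 0 ≤ α) (hβ0 : 0 ≤ β) (hβ : ∫⁻ y, .ofReal (g y) ∂μ ≤ .ofReal β) :
    ∫⁻ y, .ofReal (1 + α * g y) ∂μ ≤ .ofReal (Real.exp (α * β)) := by
  have hsplit (r : ℝ) (hr : 0 ≤ r) :
      ENNReal.ofReal (1 + α * r) = 1 + .ofReal α * .ofReal r := by
    rw [ENNReal.ofReal_add zero_le_one (by positivity), ENNReal.ofReal_one, ENNReal.ofReal_mul hα]
  simp_rw [hsplit _ (hg0 _)]
  rw [lintegral_add_left measurable_const, lintegral_const, measure_univ, mul_one,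
    lintegral_const_mul _ hg.ennreal_ofReal]
  calc 1 + .ofReal α * ∫⁻ y, .ofReal (g y) ∂μ ≤ .ofReal (1 + α * β) := by
        rw [hsplit β hβ0]; gcongr
    _ ≤ .ofReal (Real.exp (α * β)) := by
        gcongr; linarith [Real.add_one_le_exp (α * β)]

theorem lintegral_ofReal_le_iSup_setIntegral_div {X : Type*} [MeasurableSpace X]
    {ν : Measure X} {V : Set X} (hVfin : ν V < ⊤) (hV0 : ν V ≠ 0) {f : X → X → ℝ}
    (hf : ∀ x, Measurable (f x)) (hf0 : ∀ x y, 0 ≤ f x y) (hf1 : ∀ x y, f x y ≤ 1) (a : X) :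
    ∫⁻ y, .ofReal (f a y) ∂((ν V)⁻¹ • ν.restrict V)
      ≤ .ofReal ((⨆ x, ∫ y in V, f x y ∂ν) / (ν V).toReal) := by
  have : IsFiniteMeasure (ν.restrict V) := ⟨by rwa [Measure.restrict_apply_univ]⟩
  have hint (x : X) : Integrable (f x) (ν.restrict V) :=
    (integrable_const 1).mono' (hf x).aestronglyMeasurable
      (ae_of_all _ fun y => by simpa [abs_of_nonneg (hf0 x y)] using hf1 x y)
  have hbdd : BddAbove (range fun x => ∫ y in V, f x y ∂ν) :=
    ⟨(ν V).toReal, forall_mem_range.2 fun x =>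
      (setIntegral_mono (hint x) (integrable_const 1) (hf1 x)).trans (by simp [measureReal_def])⟩
  rw [lintegral_smul_measure, ← ofReal_integral_eq_lintegral_ofReal (hint a)
    (ae_of_all _ (hf0 a)), div_eq_inv_mul, ENNReal.ofReal_mul (by positivity),
    ENNReal.ofReal_inv_of_pos (ENNReal.toReal_pos hV0 hVfin.ne), ENNReal.ofReal_toReal hVfin.ne]
  exact mul_le_mul_right (ENNReal.ofReal_le_ofReal (le_ciSup hbdd a)) _

theorem measure_le_natCast_le_lintegral_pow_div {Ω : Type*} [MeasurableSpace Ω] (μ : Measure Ω)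
    {d : Ω → ℕ} (hd : Measurable d) {c : ℝ} (hc : 1 ≤ c) (t : ℝ) :
    μ {ω | t ≤ d ω} ≤ (∫⁻ ω, .ofReal c ^ d ω ∂μ) / .ofReal (c ^ t) := by
  have hpos : 0 < c ^ t := Real.rpow_pos_of_pos (by linarith) t
  rw [ENNReal.le_div_iff_mul_le (Or.inl (ENNReal.ofReal_pos.2 hpos).ne')
    (Or.inl ENNReal.ofReal_ne_top), mul_comm]
  refine le_trans ?_ (mul_meas_ge_le_lintegral₀ (measurable_from_nat.comp hd).aemeasurable
    (.ofReal (c ^ t)))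
  gcongr with ω
  intro hω
  rw [Function.comp_apply, ← ENNReal.ofReal_pow (by linarith), ← Real.rpow_natCast]
  exact ENNReal.ofReal_le_ofReal (Real.rpow_le_rpow_of_exponent_le hc hω)

theorem min_div_three_le_one_add_mul_log_one_add_sub {α : ℝ} (hα : 0 < α) :
    min α (α ^ 2) / 3 ≤ (1 + α) * Real.log (1 + α) - α := by
  have hlog := Real.le_log_one_add_of_nonneg hα.le
  rw [div_le_iff₀ (by positivity)] at hlog
  have hsq : α ^ 2 / (α + 2) ≤ (1 + α) * Real.log (1 + α) - α := by
    rw [div_le_iff₀ (by positivity)]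
    nlinarith
  refine le_trans ?_ hsq
  rcases le_total α 1 with h | h
  · rw [min_eq_right (by nlinarith), div_le_div_iff₀ (by norm_num) (by positivity)]
    nlinarith
  · rw [min_eq_left (by nlinarith), div_le_div_iff₀ (by norm_num) (by positivity)]
    nlinarith

theorem max_inv_mul_min_self_sq {α : ℝ} (hα : 0 < α) :
    max α⁻¹ (α ^ 2)⁻¹ * min α (α ^ 2) = 1 := by
  rcases le_total α 1 with h | h
  · have h2 : α ^ 2 ≤ α := by nlinarith
    rw [max_eq_right (inv_anti₀ (by positivity) h2), min_eq_right h2,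
      inv_mul_cancel₀ (by positivity)]
  · have h2 : α ≤ α ^ 2 := by nlinarith
    rw [max_eq_left (inv_anti₀ hα h2), min_eq_left h2, inv_mul_cancel₀ hα.ne']

theorem exp_mul_le_mul_rpow {α q B : ℝ} (hα : 0 < α) (hq : 0 < q) (hB : 0 ≤ B)
    (hqB : 3 * max α⁻¹ (α ^ 2)⁻¹ * Real.log q⁻¹ ≤ B) :
    Real.exp (α * B) ≤ q * (1 + α) ^ ((1 + α) * B) := by
  have hlog : Real.log q⁻¹ ≤ B * ((1 + α) * Real.log (1 + α) - α) :=
    calc Real.log q⁻¹ = 3 * max α⁻¹ (α ^ 2)⁻¹ * Real.log q⁻¹ * (min α (α ^ 2) / 3) := by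
          linear_combination (-Real.log q⁻¹) * max_inv_mul_min_self_sq hα
      _ ≤ B * (min α (α ^ 2) / 3) := by gcongr
      _ ≤ B * ((1 + α) * Real.log (1 + α) - α) := by
          gcongr; exact min_div_three_le_one_add_mul_log_one_add_sub hα
  rw [Real.rpow_def_of_pos (by linarith), ← Real.exp_log hq, ← Real.exp_add, Real.exp_le_exp]
  rw [Real.log_inv] at hlog
  linarith

theorem one_sub_exp_neg_mem_Icc {t : ℝ} (ht : 0 ≤ t) : 1 - Real.exp (-t) ∈ Icc 0 1 :=
  ⟨by linarith [Real.exp_le_one_iff.2 (neg_nonpos.2 ht)], by linarith [Real.exp_pos (-t)]⟩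

theorem min_max_injective {α : Type*} [LinearOrder α] (a : α) :
    Function.Injective fun b => (min a b, max a b) := by
  intro b c h
  simp only [Prod.mk.injEq] at h
  rcases le_total a b with hb | hb <;> rcases le_total a c with hc | hc <;> simp_all

theorem edgeOcc_iff {X : Type*} {φ : X → X → ℝ} (hφ : ∀ x y, φ x y = φ y x) {n : ℕ}
    (x : Fin n → X) (y : Fin n × Fin n → ℝ) (i j : Fin n) :
    edgeOcc φ (x, y) i j ↔ j ≠ i ∧ y (min i j, max i j) ≤ 1 - Real.exp (-φ (x i) (x j)) := by
  rcases lt_trichotomy i j with h | rfl | h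
  · simp [edgeOcc, h, h.ne', h.le, h.not_gt]
  · simp [edgeOcc]
  · simp [edgeOcc, h, h.ne, h.le, h.not_gt, hφ (x j)]

theorem measurableSet_edgeOcc {X : Type*} [MeasurableSpace X] {φ : X → X → ℝ}
    (hφ : Measurable (Function.uncurry φ)) {n : ℕ} (i j : Fin n) :
    MeasurableSet {ω : (Fin n → X) × (Fin n × Fin n → ℝ) | edgeOcc φ ω i j} := by
  unfold edgeOcc
  measurability

theorem measurable_degOcc {X : Type*} [MeasurableSpace X] {φ : X → X → ℝ}
    (hφ : Measurable (Function.uncurry φ)) {n : ℕ} (i : Fin n) :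
    Measurable fun ω : (Fin n → X) × (Fin n × Fin n → ℝ) => degOcc φ ω i := by
  classical
  simp only [degOcc, Finset.card_filter]
  exact Finset.measurable_sum _ fun j _ =>
    Measurable.ite (measurableSet_edgeOcc hφ i j) measurable_const measurable_const

theorem lintegral_pow_degOcc {X : Type*} [MeasurableSpace X] {φ : X → X → ℝ}
    (hφm : Measurable (Function.uncurry φ)) (hφ0 : ∀ x y, 0 ≤ φ x y)
    (hφsym : ∀ x y, φ x y = φ y x) (μ : Measure X) [IsProbabilityMeasure μ]
    (u : Measure ℝ) [IsProbabilityMeasure u] (hu : ∀ p ∈ Icc (0 : ℝ) 1, u (Iic p) = .ofReal p)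
    {α : ℝ} (hα : 0 ≤ α) {m : ℕ} (i : Fin (m + 1)) :
    ∫⁻ ω, .ofReal (1 + α) ^ degOcc φ ω i ∂((Measure.pi fun _ => μ).prod (Measure.pi fun _ => u))
      = ∫⁻ a, (∫⁻ b, .ofReal (1 + α * (1 - Real.exp (-φ a b))) ∂μ) ^ m ∂μ := by
  classical
  set c := ENNReal.ofReal (1 + α)
  set p : X → X → ℝ := fun a b => 1 - Real.exp (-φ a b)
  have hweight (x : Fin (m + 1) → X) (y : Fin (m + 1) × Fin (m + 1) → ℝ) :
      c ^ degOcc φ (x, y) i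
        = ∏ j, if j ≠ i ∧ y (min i j, max i j) ≤ p (x i) (x j) then c else 1 := by
    rw [degOcc, ← Finset.prod_const, Finset.prod_filter]
    exact Finset.prod_congr rfl fun j _ => if_congr (edgeOcc_iff hφsym x y i j) rfl rfl
  have hedge (a b : X) : ∫⁻ s, (if s ≤ p a b then c else 1) ∂u = .ofReal (1 + α * p a b) := by
    have hab := one_sub_exp_neg_mem_Icc (hφ0 a b)
    rw [lintegral_ite_le_eq_of_measure_Iic hab.1 (hu _ hab), ← ENNReal.ofReal_mul (by linarith),
      ← ENNReal.ofReal_add (by nlinarith [hab.1]) (by linarith [hab.2])]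
    congr 1
    ring
  -- Distinct `j` read distinct coordinates `(min i j, max i j)` of `y`, hence independent ones.
  have hinner (x : Fin (m + 1) → X) : ∫⁻ y, c ^ degOcc φ (x, y) i ∂Measure.pi (fun _ => u)
      = ∏ k, .ofReal (1 + α * p (x i) (x (i.succAbove k))) := by
    simp_rw [hweight]
    rw [lintegral_pi_prod_comp_of_injective (min_max_injective i)
      (fun j s => if j ≠ i ∧ s ≤ p (x i) (x j) then c else 1)
      (fun j => Measurable.ite ((MeasurableSet.const _).inter measurableSet_Iic)
        measurable_const measurable_const), Fin.prod_univ_succAbove _ i]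
    simp only [ne_eq, not_true_eq_false, false_and, if_false, lintegral_const, measure_univ,
      mul_one, one_mul, Fin.succAbove_ne, not_false_eq_true, true_and, hedge]
  have hmeas : Measurable fun ω => c ^ degOcc φ ω i :=
    measurable_from_nat.comp (measurable_degOcc hφm i)
  rw [lintegral_prod _ hmeas.aemeasurable, lintegral_congr hinner,
    lintegral_pi_prod_succAbove i (h := fun a b => .ofReal (1 + α * p a b)) (by fun_prop)]

theorem lintegral_pow_degOcc_le {X : Type*} [MeasurableSpace X] {φ : X → X → ℝ}
    (hφm : Measurable (Function.uncurry φ)) (hφ0 : ∀ x y, 0 ≤ φ x y)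
    (hφsym : ∀ x y, φ x y = φ y x) (μ : Measure X) [IsProbabilityMeasure μ]
    (u : Measure ℝ) [IsProbabilityMeasure u] (hu : ∀ p ∈ Icc (0 : ℝ) 1, u (Iic p) = .ofReal p)
    {β : ℝ} (hβ0 : 0 ≤ β) (hβ : ∀ a, ∫⁻ b, .ofReal (1 - Real.exp (-φ a b)) ∂μ ≤ .ofReal β)
    {α : ℝ} (hα : 0 ≤ α) {m : ℕ} (i : Fin (m + 1)) :
    ∫⁻ ω, .ofReal (1 + α) ^ degOcc φ ω i ∂((Measure.pi fun _ => μ).prod (Measure.pi fun _ => u))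
      ≤ .ofReal (Real.exp (α * (m * β))) := by
  rw [lintegral_pow_degOcc hφm hφ0 hφsym μ u hu hα i]
  calc ∫⁻ a, (∫⁻ b, .ofReal (1 + α * (1 - Real.exp (-φ a b))) ∂μ) ^ m ∂μ
      ≤ ∫⁻ _, .ofReal (Real.exp (α * β)) ^ m ∂μ := by
        gcongr with a
        exact lintegral_ofReal_one_add_mul_le_exp (by fun_prop)
          (fun b => (one_sub_exp_neg_mem_Icc (hφ0 a b)).1) hα hβ0 (hβ a)
    _ = .ofReal (Real.exp (α * (m * β))) := by
        rw [lintegral_const, measure_univ, mul_one, ← ENNReal.ofReal_pow (Real.exp_pos _).le,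
          ← Real.exp_nat_mul]
        ring_nf

theorem measure_le_degOcc_le {X : Type*} [MeasurableSpace X] {φ : X → X → ℝ}
    (hφm : Measurable (Function.uncurry φ)) (hφ0 : ∀ x y, 0 ≤ φ x y)
    (hφsym : ∀ x y, φ x y = φ y x) (μ : Measure X) [IsProbabilityMeasure μ]
    (u : Measure ℝ) [IsProbabilityMeasure u] (hu : ∀ p ∈ Icc (0 : ℝ) 1, u (Iic p) = .ofReal p)
    {β : ℝ} (hβ0 : 0 ≤ β) (hβ : ∀ a, ∫⁻ b, .ofReal (1 - Real.exp (-φ a b)) ∂μ ≤ .ofReal β)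
    {α q : ℝ} (hα : 0 < α) (hq : 0 < q) {n : ℕ}
    (hn : 3 * max α⁻¹ (α ^ 2)⁻¹ * Real.log q⁻¹ ≤ ((n : ℝ) - 1) * β) (i : Fin n) :
    ((Measure.pi fun _ => μ).prod (Measure.pi fun _ => u))
      {ω | (1 + α) * ((n : ℝ) - 1) * β ≤ degOcc φ ω i} ≤ .ofReal q := by
  obtain ⟨m, rfl⟩ : ∃ m, n = m + 1 := ⟨n - 1, by have := i.pos; omega⟩
  push_cast at hn ⊢
  rw [add_sub_cancel_right] at hn ⊢
  rw [mul_assoc]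
  calc _ ≤ _ := measure_le_natCast_le_lintegral_pow_div _
        (measurable_degOcc hφm i) (c := 1 + α) (by linarith) ((1 + α) * (m * β))
    _ ≤ .ofReal (Real.exp (α * (m * β))) / .ofReal ((1 + α) ^ ((1 + α) * (m * β))) := by
        gcongr
        exact lintegral_pow_degOcc_le hφm hφ0 hφsym μ u hu hβ0 hβ hα.le i
    _ ≤ .ofReal q := by
        refine ENNReal.div_le_of_le_mul ?_
        rw [← ENNReal.ofReal_mul hq.le]
        exact ENNReal.ofReal_le_ofReal (exp_mul_le_mul_rpow hα hq (by positivity) hn)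

theorem max_degree_bound_general {X : Type*} [MeasurableSpace X]
    (ν : Measure X) (V : Set X)
    [Fact (ν V < ⊤)] (hV0 : ν V ≠ 0)
    (φ : X → X → ℝ) (hφm : Measurable (Function.uncurry φ))
    (hφ0 : ∀ x y, 0 ≤ φ x y) (hφsym : ∀ x y, φ x y = φ y x)
    (μ : Measure X) [IsProbabilityMeasure μ] (hμ : μ = (ν V)⁻¹ • ν.restrict V)
    (u : Measure ℝ) [IsProbabilityMeasure u] (hu : u = volume.restrict (Set.Icc (0:ℝ) 1))
    (Cφ : ℝ) (hCφ : Cφ = ⨆ x : X, ∫ y in V, (1 - Real.exp (-φ x y)) ∂ν)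
    (hCφpos : 0 < Cφ)
    (α q : ℝ) (hα : 0 < α) (hq : 0 < q)
    (n : ℕ)
    (hn : 3 * max α⁻¹ (α ^ 2)⁻¹ * Real.log q⁻¹ * (ν V).toReal / Cφ + 1 ≤ (n : ℝ)) :
    ((Measure.pi fun _ : Fin n => μ).prod (Measure.pi fun _ : Fin n × Fin n => u))
      {ω | ∃ i : Fin n, (1 + α) * ((n : ℝ) - 1) * Cφ / (ν V).toReal ≤ (degOcc φ ω i : ℝ)}
      ≤ ENNReal.ofReal (q * n) := by
  have hVfin : ν V < ⊤ := Fact.out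
  have hVol : 0 < (ν V).toReal := ENNReal.toReal_pos hV0 hVfin.ne
  have hβ (a : X) :
      ∫⁻ b, .ofReal (1 - Real.exp (-φ a b)) ∂μ ≤ .ofReal (Cφ / (ν V).toReal) := by
    rw [hμ, hCφ]
    exact lintegral_ofReal_le_iSup_setIntegral_div hVfin hV0 (fun x => by fun_prop)
      (fun x y => (one_sub_exp_neg_mem_Icc (hφ0 x y)).1)
      (fun x y => (one_sub_exp_neg_mem_Icc (hφ0 x y)).2) a
  have hn' : 3 * max α⁻¹ (α ^ 2)⁻¹ * Real.log q⁻¹ ≤ ((n : ℝ) - 1) * (Cφ / (ν V).toReal) := by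
    rw [← mul_div_assoc, le_div_iff₀ hVol, ← div_le_iff₀ hCφpos]
    linarith
  simp_rw [mul_div_assoc, Set.ofPred_exists]
  calc _ ≤ ∑ i : Fin n, _ := measure_iUnion_fintype_le _ _
    _ ≤ ∑ _i : Fin n, ENNReal.ofReal q := Finset.sum_le_sum fun i _ =>
        measure_le_degOcc_le hφm hφ0 hφsym μ u (hu ▸ fun _ => volume_restrict_Icc_zero_one_Iic)
          (by positivity) hβ hα hq hn' i
    _ = .ofReal (q * n) := by simp [ENNReal.ofReal_mul hq.le, mul_comm]

/-- Maximum-degree bound for `G ~ D_n(V, φ)`: for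
`n ≥ 3 max{α⁻¹, α⁻²} ln(q⁻¹) Vol / C_φ + 1`, the probability that the maximum degree is at
least `(1+α)(n−1) C_φ / Vol` is at most `q n`, where `C_φ` is the temperedness constant. -/
theorem max_degree_bound {X : Type*} [MeasurableSpace X]
    (ν : Measure X) (V : Set X) (hV : MeasurableSet V)
    [Fact (ν V < ⊤)] (hV0 : ν V ≠ 0)
    (φ : X → X → ℝ) (hφm : Measurable (Function.uncurry φ))
    (hφ0 : ∀ x y, 0 ≤ φ x y) (hφsym : ∀ x y, φ x y = φ y x)
    (μ : Measure X) [IsProbabilityMeasure μ] (hμ : μ = (ν V)⁻¹ • ν.restrict V)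
    (u : Measure ℝ) [IsProbabilityMeasure u] (hu : u = volume.restrict (Set.Icc (0:ℝ) 1))
    (Cφ : ℝ) (hCφ : Cφ = ⨆ x : X, ∫ y in V, (1 - Real.exp (-φ x y)) ∂ν)
    (hCφpos : 0 < Cφ)
    (α q : ℝ) (hα : 0 < α) (hq : 0 < q) (hq1 : q ≤ 1)
    (n : ℕ)
    (hn : 3 * max α⁻¹ (α ^ 2)⁻¹ * Real.log q⁻¹ * (ν V).toReal / Cφ + 1 ≤ (n : ℝ)) :
    ((Measure.pi fun _ : Fin n => μ).prod (Measure.pi fun _ : Fin n × Fin n => u))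
      {ω | ∃ i : Fin n, (1 + α) * ((n : ℝ) - 1) * Cφ / (ν V).toReal ≤ (degOcc φ ω i : ℝ)}
      ≤ ENNReal.ofReal (q * n) :=
  max_degree_bound_general ν V hV0 φ hφm hφ0 hφsym μ hμ u hu Cφ hCφ hCφpos α q hα hq n hn
end

section
/- For the hard-core partition function on a finite graph G and activities λ(n) = λVol/n and λ(n−k) = λVol/(n−k) with k ≤ εn/(40λVol + ε), it holds that e^{−ε/40} Z_{G'}(λ(n−k)) ≤ Z_G(λ(n)) ≤ e^{ε/40} Z_{G'}(λ(n−k)) whenever G is a graph on [n] in which [k] is an independent set, and G' is the induced subgraph of G on the remaining n−k vertices. -/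
open Classical in
/-- Hard-core partition function of a finite graph `G` at activity `z`. -/
noncomputable def hcZ {V : Type*} [Fintype V] (G : SimpleGraph V) (z : ℝ) : ℝ :=
  ∑ I : Finset V, if ∀ i ∈ I, ∀ j ∈ I, ¬ G.Adj i j then z ^ I.card else 0

/-!
The partition function is `∑ z ^ #I` over a down-closed family of finsets, the independent sets.
Splitting each `I` into `I ∩ S` and `I \ S` gives `Z_G(z) ≤ (1 + z) ^ #S · Z_{G - S}(z)`, and
expanding `(z + d) ^ #I` binomially and sending `(I, t ⊆ I)` to `(t, I \ t)` gives
`Z(z + d) ≤ (1 + d) ^ |V| · Z(z)`. With `(1 + x) ^ m ≤ e ^ (x m)` and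
`λ(n - k) - λ(n) = k λVol / (n (n - k))`, the bound on `k` makes both exponents at most `ε / 40`.
-/

open Finset

theorem one_add_pow_le_exp_mul {x : ℝ} (hx : -1 ≤ x) (m : ℕ) :
    (1 + x) ^ m ≤ Real.exp (x * m) := by
  calc (1 + x) ^ m ≤ Real.exp x ^ m :=
        pow_le_pow_left₀ (by linarith) (by linarith [Real.add_one_le_exp x]) m
    _ = Real.exp (x * m) := by rw [← Real.exp_nat_mul, mul_comm]

namespace Finset

theorem sum_le_sum_of_injOn {ι κ M : Type*} [AddCommMonoid M] [PartialOrder M]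
    [IsOrderedAddMonoid M] {s : Finset ι} {t : Finset κ} {g : κ → M}
    (e : ι → κ) (he : Set.InjOn e s) (hest : Set.MapsTo e s t) (hg : ∀ j ∈ t, 0 ≤ g j) :
    ∑ i ∈ s, g (e i) ≤ ∑ j ∈ t, g j := by
  classical
  rw [← sum_image he]
  exact sum_le_sum_of_subset_of_nonneg (image_subset_iff.2 hest) fun j hj _ => hg j hj

variable {V : Type*} [DecidableEq V] {𝓕 : Finset (Finset V)}

theorem sum_pow_card_add_le [Fintype V] (h𝓕 : IsLowerSet (𝓕 : Set (Finset V))) {z d : ℝ}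
    (hz : 0 ≤ z) (hd : 0 ≤ d) :
    ∑ I ∈ 𝓕, (z + d) ^ #I ≤ (1 + d) ^ Fintype.card V * ∑ I ∈ 𝓕, z ^ #I := by
  have expand : ∀ I : Finset V, (z + d) ^ #I = ∑ t ∈ I.powerset, d ^ #t * z ^ #(I \ t) := by
    intro I
    rw [add_comm, ← sum_pow_mul_eq_add_pow]
    refine sum_congr rfl fun t ht => ?_
    rw [card_sdiff_of_subset (mem_powerset.1 ht)]
  calc ∑ I ∈ 𝓕, (z + d) ^ #I
      = ∑ x ∈ 𝓕.sigma powerset, d ^ #x.2 * z ^ #(x.1 \ x.2) := by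
        simp only [expand, sum_sigma]
    _ ≤ ∑ p ∈ univ ×ˢ 𝓕, d ^ #p.1 * z ^ #p.2 := by
        refine sum_le_sum_of_injOn (g := fun p : Finset V × Finset V => d ^ #p.1 * z ^ #p.2)
          (fun x : Σ _ : Finset V, Finset V => (x.2, x.1 \ x.2)) ?_ ?_
          fun p _ => by positivity
        · rintro ⟨I, t⟩ hIt ⟨I', t'⟩ hIt' h
          simp only [coe_sigma, Set.mem_sigma_iff, mem_coe, mem_powerset, Prod.mk.injEq]
            at hIt hIt' h
          obtain ⟨rfl, hsd⟩ := h
          rw [← union_sdiff_of_subset hIt.2, hsd, union_sdiff_of_subset hIt'.2]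
        · rintro ⟨I, t⟩ hIt
          simp only [coe_sigma, Set.mem_sigma_iff, mem_coe, mem_powerset] at hIt
          simpa using h𝓕 sdiff_subset hIt.1
    _ = (1 + d) ^ Fintype.card V * ∑ I ∈ 𝓕, z ^ #I := by
        rw [sum_product, add_comm, ← Fintype.sum_pow_mul_eq_add_pow, sum_mul_sum]
        simp

theorem sum_pow_card_le_mul_sum_disjoint (h𝓕 : IsLowerSet (𝓕 : Set (Finset V)))
    (S : Finset V) {z : ℝ} (hz : 0 ≤ z) :
    ∑ I ∈ 𝓕, z ^ #I ≤ (1 + z) ^ #S * ∑ I ∈ 𝓕 with Disjoint I S, z ^ #I := by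
  calc ∑ I ∈ 𝓕, z ^ #I
      = ∑ I ∈ 𝓕, z ^ #(I ∩ S) * z ^ #(I \ S) := by
        simp only [← pow_add, card_inter_add_card_sdiff]
    _ ≤ ∑ p ∈ S.powerset ×ˢ {I ∈ 𝓕 | Disjoint I S}, z ^ #p.1 * z ^ #p.2 := by
        refine sum_le_sum_of_injOn (g := fun p : Finset V × Finset V => z ^ #p.1 * z ^ #p.2)
          (fun I => (I ∩ S, I \ S)) ?_ ?_
          fun p _ => by positivity
        · intro I _ I' _ h
          simp only [Prod.mk.injEq] at h
          rw [← sdiff_union_inter I S, h.1, h.2, sdiff_union_inter]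
        · intro I hI
          simp only [coe_product, coe_powerset, coe_filter, Set.mem_prod, Set.mem_preimage,
            Set.mem_ofPred_eq]
          exact ⟨inter_subset_right, h𝓕 sdiff_subset hI, sdiff_disjoint⟩
    _ = (1 + z) ^ #S * ∑ I ∈ 𝓕 with Disjoint I S, z ^ #I := by
        rw [sum_product, add_comm, ← sum_pow_mul_eq_add_pow, sum_mul_sum]
        simp

end Finset

theorem activity_shift_bounds {L ε : ℝ} {n k : ℕ} (hL : 0 ≤ L) (hε : 0 < ε)
    (hk : (k : ℝ) ≤ ε * n / (40 * L + ε)) :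
    L / n ≤ L / (n - k) ∧ L / (n - k) * k ≤ ε / 40 ∧ (L / (n - k) - L / n) * n ≤ ε / 40 := by
  have hkε : 40 * L * k ≤ ε * (n - k) := by
    rw [le_div_iff₀ (by positivity)] at hk
    linarith
  rcases lt_or_ge 0 ((n : ℝ) - k) with hnk | hnk
  · have hn : (0 : ℝ) < n := by linarith [Nat.cast_nonneg (α := ℝ) k]
    have hk2 : L / (n - k) * k ≤ ε / 40 := by
      rw [div_mul_eq_mul_div, div_le_iff₀ hnk]
      linarith
    refine ⟨div_le_div_of_nonneg_left hL hnk (by linarith [Nat.cast_nonneg (α := ℝ) k]), hk2, ?_⟩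
    calc (L / (n - k) - L / n) * n = L / (n - k) * k := by field_simp; ring
      _ ≤ ε / 40 := hk2
  -- `k = n`: then `L * n = 0`, and `L / (n - k)` is the junk value `L / 0 = 0`.
  · have hkn : (n : ℝ) - k = 0 := le_antisymm hnk (by nlinarith [Nat.cast_nonneg (α := ℝ) k])
    have hLn : L / n = 0 := by
      rcases eq_or_lt_of_le hL with hL0 | _
      · simp [← hL0]
      · have : (k : ℝ) = 0 := by nlinarith [Nat.cast_nonneg (α := ℝ) k]
        simp [show (n : ℝ) = 0 by linarith]
    have : 0 ≤ ε / 40 := by positivity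
    simp [hkn, hLn, this]

namespace SimpleGraph

variable {V : Type*} [Fintype V] (G : SimpleGraph V)

open Classical in
noncomputable def indepFinsets : Finset (Finset V) := {I | ∀ i ∈ I, ∀ j ∈ I, ¬ G.Adj i j}

theorem mem_indepFinsets {I : Finset V} :
    I ∈ G.indepFinsets ↔ ∀ i ∈ I, ∀ j ∈ I, ¬ G.Adj i j := by
  simp [indepFinsets]

theorem isLowerSet_indepFinsets : IsLowerSet (G.indepFinsets : Set (Finset V)) := by
  intro I J hJI hI
  simp only [mem_coe, mem_indepFinsets] at hI ⊢
  exact fun i hi j hj => hI i (hJI hi) j (hJI hj)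

theorem hcZ_eq_sum_indepFinsets (z : ℝ) : hcZ G z = ∑ I ∈ G.indepFinsets, z ^ #I := by
  rw [indepFinsets, sum_filter, hcZ]

open Classical in
theorem hcZ_comap_subtype (p : V → Prop) [DecidablePred p] (z : ℝ) :
    hcZ (G.comap (Subtype.val : Subtype p → V)) z =
      ∑ I ∈ G.indepFinsets with Disjoint I ({v | ¬ p v} : Finset V), z ^ #I := by
  rw [hcZ_eq_sum_indepFinsets]
  refine sum_nbij' (fun J => J.map (Function.Embedding.subtype p)) (fun I => I.subtype p)
    ?_ ?_ ?_ ?_ ?_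
  · intro J hJ
    simp only [mem_indepFinsets] at hJ
    simp only [mem_filter, mem_indepFinsets, forall_mem_map, Function.Embedding.coe_subtype]
    exact ⟨hJ, Finset.disjoint_left.2 fun v hv => by
      obtain ⟨v, -, rfl⟩ := mem_map.1 hv
      simpa using v.2⟩
  · intro I hI
    simp only [mem_filter, mem_indepFinsets] at hI ⊢
    exact fun i hi j hj => hI.1 _ (mem_subtype.1 hi) _ (mem_subtype.1 hj)
  · intro J _
    ext v
    simp [v.2]
  · intro I hI
    simp only [mem_filter] at hI
    exact subtype_map_of_mem fun v hv =>
      by_contra fun h => Finset.disjoint_left.1 hI.2 hv (by simpa)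
  · intro J _
    simp

theorem hcZ_nonneg {z : ℝ} (hz : 0 ≤ z) : 0 ≤ hcZ G z := by
  rw [hcZ_eq_sum_indepFinsets]
  positivity

theorem hcZ_mono {z z' : ℝ} (hz : 0 ≤ z) (h : z ≤ z') : hcZ G z ≤ hcZ G z' := by
  simp only [hcZ_eq_sum_indepFinsets]
  gcongr

theorem hcZ_add_le_exp_mul {z d : ℝ} (hz : 0 ≤ z) (hd : 0 ≤ d) :
    hcZ G (z + d) ≤ Real.exp (d * Fintype.card V) * hcZ G z := by
  classical
  simp only [hcZ_eq_sum_indepFinsets]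
  calc _ ≤ (1 + d) ^ Fintype.card V * ∑ I ∈ G.indepFinsets, z ^ #I :=
        sum_pow_card_add_le G.isLowerSet_indepFinsets hz hd
    _ ≤ _ := by gcongr; exact one_add_pow_le_exp_mul (by linarith) _

theorem hcZ_comap_subtype_le (p : V → Prop) [DecidablePred p] {z : ℝ} (hz : 0 ≤ z) :
    hcZ (G.comap (Subtype.val : Subtype p → V)) z ≤ hcZ G z := by
  classical
  rw [hcZ_comap_subtype, hcZ_eq_sum_indepFinsets]
  exact sum_le_sum_of_subset_of_nonneg (filter_subset _ _) fun I _ _ => by positivity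

open Classical in
theorem hcZ_le_exp_mul_hcZ_comap_subtype (p : V → Prop) [DecidablePred p] {z : ℝ}
    (hz : 0 ≤ z) :
    hcZ G z ≤ Real.exp (z * Fintype.card {v // ¬ p v}) *
      hcZ (G.comap (Subtype.val : Subtype p → V)) z := by
  rw [hcZ_comap_subtype, hcZ_eq_sum_indepFinsets, Fintype.card_subtype]
  calc _ ≤ (1 + z) ^ #({v | ¬ p v} : Finset V) *
        ∑ I ∈ G.indepFinsets with Disjoint I ({v | ¬ p v} : Finset V), z ^ #I :=
        sum_pow_card_le_mul_sum_disjoint G.isLowerSet_indepFinsets _ hz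
    _ ≤ _ := by gcongr; exact one_add_pow_le_exp_mul (by linarith) _

end SimpleGraph

theorem hcZ_remove_independent_prefix_general {n k : ℕ} (G : SimpleGraph (Fin n))
    (lam Vol ε : ℝ) (hlam : 0 ≤ lam) (hVol : 0 ≤ Vol) (hε : 0 < ε)
    (hk : (k : ℝ) ≤ ε * n / (40 * (lam * Vol) + ε)) :
    Real.exp (-(ε / 40)) *
        hcZ (G.comap (Subtype.val : {v : Fin n // k ≤ (v : ℕ)} → Fin n))
          (lam * Vol / ((n : ℝ) - (k : ℝ)))
      ≤ hcZ G (lam * Vol / n) ∧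
    hcZ G (lam * Vol / n)
      ≤ Real.exp (ε / 40) *
          hcZ (G.comap (Subtype.val : {v : Fin n // k ≤ (v : ℕ)} → Fin n))
            (lam * Vol / ((n : ℝ) - (k : ℝ))) := by
  set G' := G.comap (Subtype.val : {v : Fin n // k ≤ (v : ℕ)} → Fin n)
  set z₁ := lam * Vol / n
  set z₂ := lam * Vol / ((n : ℝ) - k)
  obtain ⟨hz₁₂, hz₂k, hdn⟩ := activity_shift_bounds (mul_nonneg hlam hVol) hε hk
  have hz₁ : 0 ≤ z₁ := by positivity
  have hz₂ : 0 ≤ z₂ := hz₁.trans hz₁₂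
  have hprefix : Fintype.card {v : Fin n // ¬ k ≤ (v : ℕ)} ≤ k := by
    simp [Fintype.card_subtype, Fin.card_filter_val_lt]
  have hsuffix : Fintype.card {v : Fin n // k ≤ (v : ℕ)} ≤ n :=
    (Fintype.card_subtype_le _).trans_eq (Fintype.card_fin n)
  have upper : hcZ G z₁ ≤ Real.exp (ε / 40) * hcZ G' z₂ := calc
    hcZ G z₁ ≤ hcZ G z₂ := G.hcZ_mono hz₁ hz₁₂
    _ ≤ Real.exp (z₂ * Fintype.card {v : Fin n // ¬ k ≤ (v : ℕ)}) * hcZ G' z₂ :=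
      G.hcZ_le_exp_mul_hcZ_comap_subtype _ hz₂
    _ ≤ Real.exp (ε / 40) * hcZ G' z₂ := by
      gcongr
      · exact G'.hcZ_nonneg hz₂
      · exact (mul_le_mul_of_nonneg_left (by exact_mod_cast hprefix) hz₂).trans hz₂k
  have lower : hcZ G' z₂ ≤ Real.exp (ε / 40) * hcZ G z₁ := calc
    hcZ G' z₂ = hcZ G' (z₁ + (z₂ - z₁)) := by rw [add_sub_cancel]
    _ ≤ Real.exp ((z₂ - z₁) * Fintype.card {v : Fin n // k ≤ (v : ℕ)}) * hcZ G' z₁ :=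
      G'.hcZ_add_le_exp_mul hz₁ (sub_nonneg.2 hz₁₂)
    _ ≤ Real.exp (ε / 40) * hcZ G z₁ := by
      gcongr
      · exact G'.hcZ_nonneg hz₁
      · exact (mul_le_mul_of_nonneg_left (by exact_mod_cast hsuffix) (sub_nonneg.2 hz₁₂)).trans
          hdn
      · exact G.hcZ_comap_subtype_le _ hz₁
  refine ⟨?_, upper⟩
  rw [Real.exp_neg, inv_mul_le_iff₀ (Real.exp_pos _)]
  exact lower

/-- Let `G` be a graph on `[n]` in which the first `k` vertices form an independent set, and
let `G'` be the induced subgraph on the remaining `n−k` vertices. For activities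
`λ(n) = λVol/n` and `λ(n−k) = λVol/(n−k)`, if `k ≤ εn/(40 λVol + ε)` then
`e^{−ε/40} Z_{G'}(λ(n−k)) ≤ Z_G(λ(n)) ≤ e^{ε/40} Z_{G'}(λ(n−k))`. -/
theorem hcZ_remove_independent_prefix {n k : ℕ} (G : SimpleGraph (Fin n))
    (hindep : ∀ i j : Fin n, (i : ℕ) < k → (j : ℕ) < k → ¬ G.Adj i j)
    (lam Vol ε : ℝ) (hlam : 0 ≤ lam) (hVol : 0 ≤ Vol) (hε : 0 < ε)
    (hk : (k : ℝ) ≤ ε * n / (40 * (lam * Vol) + ε)) :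
    Real.exp (-(ε / 40)) *
        hcZ (G.comap (Subtype.val : {v : Fin n // k ≤ (v : ℕ)} → Fin n))
          (lam * Vol / ((n : ℝ) - (k : ℝ)))
      ≤ hcZ G (lam * Vol / n) ∧
    hcZ G (lam * Vol / n)
      ≤ Real.exp (ε / 40) *
          hcZ (G.comap (Subtype.val : {v : Fin n // k ≤ (v : ℕ)} → Fin n))
            (lam * Vol / ((n : ℝ) - (k : ℝ))) :=
  hcZ_remove_independent_prefix_general G lam Vol ε hlam hVol hε hk
end
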